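/- arXiv:2103.08901 — 7 statements merged into one kernel-verified Lean document; each statement's English description precedes it below -/
import Mathlib

section
/- On a Lie group G, the vector field G_0 = u^i Ũ_i on TG \ 0 (where Ũ_i are complete lifts of the left invariant frame fields U_i and u^i the corresponding fiber coordinates) equals v^i Ṽ_i, the analogous expression built from the right invariant frame. Consequently G_0 is invariant under the tangent lifts of both all left translations and all right translations. -/
noncomputable section

/-- The left invariant vector field on the Lie group (in a global chart, with
multiplication `m` and identity `one`) extending the tangent vector `v` at the identity:
`U_v(g) = (L_g)_* v = D(m g)(one) v`. -/
def leftInvExt {E : Type*} [NormedAddCommGroup E] [NormedSpace ℝ E]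
    (m : E → E → E) (one : E) (v : E) : E → E :=
  fun g => fderiv ℝ (m g) one v

/-- The right invariant vector field extending `v`: `V_v(g) = (R_g)_* v`. -/
def rightInvExt {E : Type*} [NormedAddCommGroup E] [NormedSpace ℝ E]
    (m : E → E → E) (one : E) (v : E) : E → E :=
  fun g => fderiv ℝ (fun x => m x g) one v

/-- The Lie algebra bracket on `g = T_e G`: the value at the identity of the Lie bracket
of the left invariant extensions. -/
def liaBracket {E : Type*} [NormedAddCommGroup E] [NormedSpace ℝ E]
    (m : E → E → E) (one : E) (v w : E) : E :=
  VectorField.lieBracket ℝ (leftInvExt m one v) (leftInvExt m one w) one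

/-- The complete lift of a vector field `V` to the tangent bundle `TE = E × E`:
`Ṽ(x, y) = (V x, DV(x) y)`. -/
def completeLift {E : Type*} [NormedAddCommGroup E] [NormedSpace ℝ E]
    (V : E → E) : E × E → E × E :=
  fun p => (V p.1, fderiv ℝ V p.1 p.2)

section Aux

variable {E : Type*} [NormedAddCommGroup E] [NormedSpace ℝ E]

/-- The partial derivative of the multiplication in the second variable, as a function of
the pair of base points. -/
def D2f (m : E → E → E) : E × E → E →L[ℝ] E :=
  fun q => (fderiv ℝ (fun p : E × E => m p.1 p.2) q).comp (ContinuousLinearMap.inr ℝ E E)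

/-- The partial derivative of the multiplication in the first variable. -/
def D1f (m : E → E → E) : E × E → E →L[ℝ] E :=
  fun q => (fderiv ℝ (fun p : E × E => m p.1 p.2) q).comp (ContinuousLinearMap.inl ℝ E E)

theorem hasFDerivAt_D2f {m : E → E → E} (hm : ContDiff ℝ (⊤ : ℕ∞) (fun p : E × E => m p.1 p.2))
    (a bb : E) : HasFDerivAt (m a) (D2f m (a, bb)) bb :=
  ((hm.differentiable (by simp) (a, bb)).hasFDerivAt).comp bb (hasFDerivAt_prodMk_right a bb)

theorem hasFDerivAt_D1f {m : E → E → E} (hm : ContDiff ℝ (⊤ : ℕ∞) (fun p : E × E => m p.1 p.2))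
    (a bb : E) : HasFDerivAt (fun x => m x bb) (D1f m (a, bb)) a :=
  ((hm.differentiable (by simp) (a, bb)).hasFDerivAt).comp (f := fun e : E => (e, bb)) a (hasFDerivAt_prodMk_left a bb)

theorem fderiv_snd_eq {m : E → E → E} (hm : ContDiff ℝ (⊤ : ℕ∞) (fun p : E × E => m p.1 p.2))
    (a bb : E) : fderiv ℝ (m a) bb = D2f m (a, bb) := (hasFDerivAt_D2f hm a bb).fderiv

theorem fderiv_fst_eq {m : E → E → E} (hm : ContDiff ℝ (⊤ : ℕ∞) (fun p : E × E => m p.1 p.2))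
    (a bb : E) : fderiv ℝ (fun x => m x bb) a = D1f m (a, bb) := (hasFDerivAt_D1f hm a bb).fderiv

theorem contDiff_D2f {m : E → E → E} (hm : ContDiff ℝ (⊤ : ℕ∞) (fun p : E × E => m p.1 p.2)) :
    ContDiff ℝ (⊤ : ℕ∞) (D2f m) := (hm.fderiv_right (by simp)).clm_comp contDiff_const

theorem contDiff_D1f {m : E → E → E} (hm : ContDiff ℝ (⊤ : ℕ∞) (fun p : E × E => m p.1 p.2)) :
    ContDiff ℝ (⊤ : ℕ∞) (D1f m) := (hm.fderiv_right (by simp)).clm_comp contDiff_const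

theorem fderiv_clm_apply_const {F G : Type*} [NormedAddCommGroup F] [NormedSpace ℝ F]
    [NormedAddCommGroup G] [NormedSpace ℝ G]
    {L : E → F →L[ℝ] G} {x : E} (hL : DifferentiableAt ℝ L x) (v : F) (h : E) :
    fderiv ℝ (fun a => L a v) x h = (fderiv ℝ L x h) v := by
  rw [(hL.hasFDerivAt.clm_apply (hasFDerivAt_const v x)).fderiv]
  simp

/-- The key symmetry fact: the mixed second derivative expressions coming from the left
and the right invariant frames agree, thanks to associativity and the symmetry of second
derivatives. -/
theorem key {m : E → E → E} (hm : ContDiff ℝ (⊤ : ℕ∞) (fun p : E × E => m p.1 p.2)) {one : E}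
    (h1l : ∀ x, m one x = x) (h1r : ∀ x, m x one = x)
    (hassoc : ∀ a bb cc, m (m a bb) cc = m a (m bb cc))
    (g y w w' : E) (hw : D2f m (g, one) w = y) (hw' : D1f m (one, g) w' = y) :
    fderiv ℝ (fun a => D2f m (a, one) w) g y = fderiv ℝ (fun c => D1f m (one, c) w') g y := by
  have hmd : Differentiable ℝ (fun p : E × E => m p.1 p.2) := hm.differentiable (by simp)
  have hψd : ∀ q : E × E, HasFDerivAt (fun q : E × E => ((m q.1 g, q.2) : E × E))
      (((D1f m (q.1, g)).comp (ContinuousLinearMap.fst ℝ E E)).prod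
        (ContinuousLinearMap.snd ℝ E E)) q :=
    fun q => ((hasFDerivAt_D1f hm q.1 g).comp q hasFDerivAt_fst).prodMk hasFDerivAt_snd
  have hψ₂d : ∀ q : E × E, HasFDerivAt (fun q : E × E => ((q.1, m g q.2) : E × E))
      ((ContinuousLinearMap.fst ℝ E E).prod
        ((D2f m (g, q.2)).comp (ContinuousLinearMap.snd ℝ E E))) q :=
    fun q => hasFDerivAt_fst.prodMk ((hasFDerivAt_D2f hm g q.2).comp q hasFDerivAt_snd)
  have hΦc : ContDiff ℝ (⊤ : ℕ∞) (fun q : E × E => m (m q.1 g) q.2) :=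
    hm.comp ((hm.comp (contDiff_fst.prodMk contDiff_const)).prodMk contDiff_snd)
  have hΦeq : (fun q : E × E => m (m q.1 g) q.2) = fun q : E × E => m q.1 (m g q.2) :=
    funext fun q => hassoc _ _ _
  have hΦd1 : ∀ q : E × E, HasFDerivAt (fun q : E × E => m (m q.1 g) q.2)
      ((fderiv ℝ (fun p : E × E => m p.1 p.2) (m q.1 g, q.2)).comp
        (((D1f m (q.1, g)).comp (ContinuousLinearMap.fst ℝ E E)).prod
          (ContinuousLinearMap.snd ℝ E E))) q :=
    fun q => ((hmd _).hasFDerivAt).comp q (hψd q)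
  have hΦd2 : ∀ q : E × E, HasFDerivAt (fun q : E × E => m (m q.1 g) q.2)
      ((fderiv ℝ (fun p : E × E => m p.1 p.2) (q.1, m g q.2)).comp
        ((ContinuousLinearMap.fst ℝ E E).prod
          ((D2f m (g, q.2)).comp (ContinuousLinearMap.snd ℝ E E)))) q := by
    rw [hΦeq]
    exact fun q => ((hmd _).hasFDerivAt).comp q (hψ₂d q)
  have E1 : ∀ q : E × E, fderiv ℝ (fun q : E × E => m (m q.1 g) q.2) q ((0 : E), w)
      = D2f m (m q.1 g, q.2) w := by
    intro q
    rw [(hΦd1 q).fderiv]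
    simp [D2f]
  have E2 : ∀ q : E × E, fderiv ℝ (fun q : E × E => m (m q.1 g) q.2) q (w', (0 : E))
      = D1f m (q.1, m g q.2) w' := by
    intro q
    rw [(hΦd2 q).fderiv]
    simp [D1f]
  have hΦf : ContDiff ℝ (⊤ : ℕ∞) (fderiv ℝ (fun q : E × E => m (m q.1 g) q.2)) :=
    hΦc.fderiv_right (by simp)
  have hsym := (hΦc.contDiffAt (x := ((one, one) : E × E))).isSymmSndFDerivAt (by simp only [minSmoothness_of_isRCLikeNormedField]; exact WithTop.coe_le_coe.mpr (le_top : (2 : ℕ∞) ≤ ⊤))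
  have hD2fw : Differentiable ℝ (fun r : E × E => D2f m r w) :=
    ((contDiff_D2f hm).clm_apply contDiff_const).differentiable (by simp)
  have hD1fw : Differentiable ℝ (fun r : E × E => D1f m r w') :=
    ((contDiff_D1f hm).clm_apply contDiff_const).differentiable (by simp)
  have hA : fderiv ℝ (fderiv ℝ (fun q : E × E => m (m q.1 g) q.2)) (one, one) (w', 0) (0, w)
      = fderiv ℝ (fun a => D2f m (a, one) w) g y := by
    rw [← fderiv_clm_apply_const (hΦf.differentiable (by simp) ((one, one) : E × E))
      ((0 : E), w) ((w', (0 : E)))]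
    rw [funext E1]
    have hcomp : HasFDerivAt (fun q : E × E => D2f m (m q.1 g, q.2) w)
        ((fderiv ℝ (fun r : E × E => D2f m r w) (m one g, one)).comp
          (((D1f m (one, g)).comp (ContinuousLinearMap.fst ℝ E E)).prod
            (ContinuousLinearMap.snd ℝ E E))) ((one, one) : E × E) :=
      ((hD2fw ((m one g, one) : E × E)).hasFDerivAt).comp (f := fun q : E × E => ((m q.1 g, q.2) : E × E)) ((one, one) : E × E)
        (hψd ((one, one) : E × E))
    rw [hcomp.fderiv]
    have hpart : HasFDerivAt (fun a : E => D2f m (a, one) w)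
        ((fderiv ℝ (fun r : E × E => D2f m r w) (g, one)).comp
          (ContinuousLinearMap.inl ℝ E E)) g :=
      ((hD2fw ((g, one) : E × E)).hasFDerivAt).comp (f := fun e : E => (e, one)) g (hasFDerivAt_prodMk_left g one)
    rw [hpart.fderiv]
    simp only [ContinuousLinearMap.comp_apply, ContinuousLinearMap.prod_apply,
      ContinuousLinearMap.coe_fst', ContinuousLinearMap.coe_snd',
      ContinuousLinearMap.inl_apply, h1l, hw']
  have hB : fderiv ℝ (fderiv ℝ (fun q : E × E => m (m q.1 g) q.2)) (one, one) (0, w) (w', 0)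
      = fderiv ℝ (fun c => D1f m (one, c) w') g y := by
    rw [← fderiv_clm_apply_const (hΦf.differentiable (by simp) ((one, one) : E × E))
      ((w', (0 : E))) (((0 : E), w))]
    rw [funext E2]
    have hcomp : HasFDerivAt (fun q : E × E => D1f m (q.1, m g q.2) w')
        ((fderiv ℝ (fun r : E × E => D1f m r w') (one, m g one)).comp
          ((ContinuousLinearMap.fst ℝ E E).prod
            ((D2f m (g, one)).comp (ContinuousLinearMap.snd ℝ E E)))) ((one, one) : E × E) :=
      ((hD1fw ((one, m g one) : E × E)).hasFDerivAt).comp (f := fun q : E × E => ((q.1, m g q.2) : E × E)) ((one, one) : E × E)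
        (hψ₂d ((one, one) : E × E))
    rw [hcomp.fderiv]
    have hpart : HasFDerivAt (fun c : E => D1f m (one, c) w')
        ((fderiv ℝ (fun r : E × E => D1f m r w') (one, g)).comp
          (ContinuousLinearMap.inr ℝ E E)) g :=
      ((hD1fw ((one, g) : E × E)).hasFDerivAt).comp g (hasFDerivAt_prodMk_right one g)
    rw [hpart.fderiv]
    simp only [ContinuousLinearMap.comp_apply, ContinuousLinearMap.prod_apply,
      ContinuousLinearMap.coe_fst', ContinuousLinearMap.coe_snd',
      ContinuousLinearMap.inr_apply, h1r, hw]
  rw [← hA, ← hB]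
  exact hsym _ _

/-- Invariance of the complete lift under the tangent lift of a diffeomorphism preserving
the vector field. -/
theorem lift_inv {φ V : E → E} (hφ : ContDiff ℝ (⊤ : ℕ∞) φ) (hV : Differentiable ℝ V)
    (hinv : ∀ a, V (φ a) = fderiv ℝ φ a (V a)) (p : E × E) :
    fderiv ℝ (fun q : E × E => ((φ q.1, fderiv ℝ φ q.1 q.2) : E × E)) p
        (completeLift V p) = completeLift V (φ p.1, fderiv ℝ φ p.1 p.2) := by
  have hφd : Differentiable ℝ φ := hφ.differentiable (by simp)
  have hDφ : ContDiff ℝ (⊤ : ℕ∞) (fderiv ℝ φ) := hφ.fderiv_right (by simp)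
  have hc : HasFDerivAt (fun q : E × E => fderiv ℝ φ q.1)
      ((fderiv ℝ (fderiv ℝ φ) p.1).comp (ContinuousLinearMap.fst ℝ E E)) p :=
    ((hDφ.differentiable (by simp) p.1).hasFDerivAt).comp p hasFDerivAt_fst
  have h2 := hc.clm_apply hasFDerivAt_snd
  have h1 : HasFDerivAt (fun q : E × E => φ q.1)
      ((fderiv ℝ φ p.1).comp (ContinuousLinearMap.fst ℝ E E)) p :=
    (hφd p.1).hasFDerivAt.comp p hasFDerivAt_fst
  have hT := h1.prodMk h2
  rw [hT.fderiv]
  have keyeq : fderiv ℝ V (φ p.1) (fderiv ℝ φ p.1 p.2)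
      = fderiv ℝ φ p.1 (fderiv ℝ V p.1 p.2) + fderiv ℝ (fderiv ℝ φ) p.1 (V p.1) p.2 := by
    have hLft : HasFDerivAt (fun a => V (φ a))
        ((fderiv ℝ V (φ p.1)).comp (fderiv ℝ φ p.1)) p.1 :=
      (hV (φ p.1)).hasFDerivAt.comp p.1 (hφd p.1).hasFDerivAt
    have hRgt : HasFDerivAt (fun a => fderiv ℝ φ a (V a))
        ((fderiv ℝ φ p.1).comp (fderiv ℝ V p.1)
          + (fderiv ℝ (fderiv ℝ φ) p.1).flip (V p.1)) p.1 :=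
      ((hDφ.differentiable (by simp) p.1).hasFDerivAt).clm_apply (hV p.1).hasFDerivAt
    have hfeq : (fun a => V (φ a)) = fun a => fderiv ℝ φ a (V a) := funext hinv
    rw [hfeq] at hLft
    have hCLM := hLft.unique hRgt
    have happ := congrFun (congrArg DFunLike.coe hCLM) p.2
    simp only [ContinuousLinearMap.comp_apply, ContinuousLinearMap.add_apply,
      ContinuousLinearMap.flip_apply] at happ
    have hsy := (hφ.contDiffAt (x := p.1)).isSymmSndFDerivAt (by simp only [minSmoothness_of_isRCLikeNormedField]; exact WithTop.coe_le_coe.mpr (le_top : (2 : ℕ∞) ≤ ⊤)) p.2 (V p.1)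
    rw [hsy] at happ
    exact happ
  show _ = ((V (φ p.1), fderiv ℝ V (φ p.1) (fderiv ℝ φ p.1 p.2)) : E × E)
  simp only [completeLift, ContinuousLinearMap.prod_apply, ContinuousLinearMap.comp_apply,
    ContinuousLinearMap.add_apply, ContinuousLinearMap.coe_fst', ContinuousLinearMap.coe_snd',
    ContinuousLinearMap.flip_apply]
  refine Prod.ext_iff.mpr ⟨(hinv p.1).symm, ?_⟩
  rw [keyeq]

theorem injD2 {m : E → E → E} (hm : ContDiff ℝ (⊤ : ℕ∞) (fun p : E × E => m p.1 p.2))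
    {one : E} (inv : E → E) (h1l : ∀ x, m one x = x)
    (hassoc : ∀ a bb cc, m (m a bb) cc = m a (m bb cc))
    (hinvl : ∀ x, m (inv x) x = one) (a : E) :
    Function.Injective (D2f m (a, one)) := by
  have hfun : (fun x => m (inv a) (m a x)) = (fun x : E => x) := funext fun x => by
    rw [← hassoc, hinvl, h1l]
  have hcomp : HasFDerivAt (fun x => m (inv a) (m a x))
      ((D2f m (inv a, m a one)).comp (D2f m (a, one))) one :=
    (hasFDerivAt_D2f hm (inv a) (m a one)).comp one (hasFDerivAt_D2f hm a one)
  rw [hfun] at hcomp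
  have hid : (D2f m (inv a, m a one)).comp (D2f m (a, one)) = ContinuousLinearMap.id ℝ E :=
    hcomp.unique (hasFDerivAt_id one)
  intro x y hxy
  have h3 := congrArg (D2f m (inv a, m a one)) hxy
  rw [← ContinuousLinearMap.comp_apply, ← ContinuousLinearMap.comp_apply, hid] at h3
  simpa using h3

theorem injD1 {m : E → E → E} (hm : ContDiff ℝ (⊤ : ℕ∞) (fun p : E × E => m p.1 p.2))
    {one : E} (inv : E → E) (h1r : ∀ x, m x one = x)
    (hassoc : ∀ a bb cc, m (m a bb) cc = m a (m bb cc))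
    (hinvr : ∀ x, m x (inv x) = one) (a c : E) :
    Function.Injective (D1f m (a, c)) := by
  have hfun : (fun x => m (m x c) (inv c)) = (fun x : E => x) := funext fun x => by
    rw [hassoc, hinvr, h1r]
  have hcomp : HasFDerivAt (fun x => m (m x c) (inv c))
      ((D1f m (m a c, inv c)).comp (D1f m (a, c))) a :=
    by have := (hasFDerivAt_D1f hm (m a c) (inv c)).comp a (hasFDerivAt_D1f hm a c); exact this
  rw [hfun] at hcomp
  have hid : (D1f m (m a c, inv c)).comp (D1f m (a, c)) = ContinuousLinearMap.id ℝ E :=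
    hcomp.unique (hasFDerivAt_id a)
  intro x y hxy
  have h3 := congrArg (D1f m (m a c, inv c)) hxy
  rw [← ContinuousLinearMap.comp_apply, ← ContinuousLinearMap.comp_apply, hid] at h3
  simpa using h3

theorem coeff_unique {n : ℕ} (b : Module.Basis (Fin n) ℝ E) {T : E →L[ℝ] E}
    (hT : Function.Injective T) {c d : Fin n → ℝ}
    (h : ∑ i, c i • T (b i) = ∑ i, d i • T (b i)) : c = d := by
  have h2 : T (∑ i, c i • b i) = T (∑ i, d i • b i) := by
    rw [map_sum, map_sum]
    simpa [map_smul] using h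
  have h3 := hT h2
  have h4 : (b.repr (∑ i, c i • b i) : Fin n → ℝ) = b.repr (∑ i, d i • b i) := by rw [h3]
  rwa [Module.Basis.repr_sum_self, Module.Basis.repr_sum_self] at h4

end Aux

/-- the vector field `G₀ = u^i Ũ_i` on `TG \ 0` built from the left
invariant frame equals `v^i Ṽ_i`, the analogous field built from the right invariant
frame, and it is invariant under the tangent lifts of all left translations and of all
right translations. -/
theorem statement8
    {E : Type*} [NormedAddCommGroup E] [NormedSpace ℝ E] [FiniteDimensional ℝ E]
    {n : ℕ}
    (m : E → E → E) (one : E) (inv : E → E)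
    (hm : ContDiff ℝ (⊤ : ℕ∞) (fun p : E × E => m p.1 p.2))
    (hinv : ContDiff ℝ (⊤ : ℕ∞) inv)
    (h1l : ∀ x, m one x = x) (h1r : ∀ x, m x one = x)
    (hassoc : ∀ a bb cc, m (m a bb) cc = m a (m bb cc))
    (hinvl : ∀ x, m (inv x) x = one) (hinvr : ∀ x, m x (inv x) = one)
    (b : Module.Basis (Fin n) ℝ E)
    (u : E × E → Fin n → ℝ)
    (hu : ∀ p : E × E, ∑ i, u p i • leftInvExt m one (b i) p.1 = p.2)
    (v : E × E → Fin n → ℝ)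
    (hv : ∀ p : E × E, ∑ i, v p i • rightInvExt m one (b i) p.1 = p.2) :
    (∀ p : E × E, p.2 ≠ 0 →
      ∑ i, u p i • completeLift (leftInvExt m one (b i)) p
        = ∑ i, v p i • completeLift (rightInvExt m one (b i)) p) ∧
    (∀ (h : E) (p : E × E), p.2 ≠ 0 →
      fderiv ℝ (fun q : E × E => ((m h q.1, fderiv ℝ (m h) q.1 q.2) : E × E)) p
          (∑ i, u p i • completeLift (leftInvExt m one (b i)) p)
        = ∑ i, u (m h p.1, fderiv ℝ (m h) p.1 p.2) i •
            completeLift (leftInvExt m one (b i)) (m h p.1, fderiv ℝ (m h) p.1 p.2)) ∧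
    (∀ (h : E) (p : E × E), p.2 ≠ 0 →
      fderiv ℝ (fun q : E × E =>
            ((m q.1 h, fderiv ℝ (fun x => m x h) q.1 q.2) : E × E)) p
          (∑ i, u p i • completeLift (leftInvExt m one (b i)) p)
        = ∑ i, u (m p.1 h, fderiv ℝ (fun x => m x h) p.1 p.2) i •
            completeLift (leftInvExt m one (b i))
              (m p.1 h, fderiv ℝ (fun x => m x h) p.1 p.2)) := by
  -- basic rewrites of the frames
  have hUfun : ∀ z : E, leftInvExt m one z = fun a => D2f m (a, one) z := by
    intro z
    funext a
    show fderiv ℝ (m a) one z = D2f m (a, one) z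
    rw [fderiv_snd_eq hm a one]
  have hVfun : ∀ z : E, rightInvExt m one z = fun a => D1f m (one, a) z := by
    intro z
    funext a
    show fderiv ℝ (fun x => m x a) one z = D1f m (one, a) z
    rw [fderiv_fst_eq hm one a]
  have hUc : ∀ z : E, ContDiff ℝ (⊤ : ℕ∞) (fun a => D2f m (a, one) z) := fun z =>
    ((contDiff_D2f hm).comp (contDiff_id.prodMk contDiff_const)).clm_apply contDiff_const
  have hVc : ∀ z : E, ContDiff ℝ (⊤ : ℕ∞) (fun a => D1f m (one, a) z) := fun z =>
    ((contDiff_D1f hm).comp (contDiff_const.prodMk contDiff_id)).clm_apply contDiff_const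
  have hUdiff : ∀ z : E, Differentiable ℝ (leftInvExt m one z) := fun z => by
    rw [hUfun]; exact (hUc z).differentiable (by simp)
  have hVdiff : ∀ z : E, Differentiable ℝ (rightInvExt m one z) := fun z => by
    rw [hVfun]; exact (hVc z).differentiable (by simp)
  -- invariance of the frames:
  have hinvU : ∀ (h a z : E),
      leftInvExt m one z (m h a) = fderiv ℝ (m h) a (leftInvExt m one z a) := by
    intro h a z
    have hfun : (m (m h a)) = fun x => m h (m a x) := funext fun x => hassoc h a x
    have hcomp : HasFDerivAt (fun x => m h (m a x))
        ((D2f m (h, m a one)).comp (D2f m (a, one))) one :=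
      (hasFDerivAt_D2f hm h (m a one)).comp one (hasFDerivAt_D2f hm a one)
    have hfd : fderiv ℝ (m (m h a)) one = (D2f m (h, m a one)).comp (D2f m (a, one)) := by
      rw [hfun]; exact hcomp.fderiv
    show fderiv ℝ (m (m h a)) one z = _
    rw [hfd]
    rw [fderiv_snd_eq hm h a, hUfun z]
    rw [h1r a]
    rfl
  have hinvV : ∀ (h a z : E),
      rightInvExt m one z (m a h) = fderiv ℝ (fun x => m x h) a (rightInvExt m one z a) := by
    intro h a z
    have hfun : (fun x => m x (m a h)) = fun x => m (m x a) h :=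
      funext fun x => (hassoc x a h).symm
    have hcomp : HasFDerivAt (fun x => m (m x a) h)
        ((D1f m (m one a, h)).comp (D1f m (one, a))) one :=
      by have := (hasFDerivAt_D1f hm (m one a) h).comp one (hasFDerivAt_D1f hm one a); exact this
    have hfd : fderiv ℝ (fun x => m x (m a h)) one
        = (D1f m (m one a, h)).comp (D1f m (one, a)) := by
      rw [hfun]; exact hcomp.fderiv
    show fderiv ℝ (fun x => m x (m a h)) one z = _
    rw [hfd]
    rw [fderiv_fst_eq hm a h, hVfun z]
    rw [h1l a]
    rfl
  -- coefficient uniqueness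
  have coeffL : ∀ (a : E) (c d : Fin n → ℝ),
      ∑ i, c i • leftInvExt m one (b i) a = ∑ i, d i • leftInvExt m one (b i) a → c = d := by
    intro a c d hcd
    simp only [hUfun] at hcd
    exact coeff_unique b (injD2 hm inv h1l hassoc hinvl a) hcd
  have coeffR : ∀ (a : E) (c d : Fin n → ℝ),
      ∑ i, c i • rightInvExt m one (b i) a = ∑ i, d i • rightInvExt m one (b i) a → c = d := by
    intro a c d hcd
    simp only [hVfun] at hcd
    exact coeff_unique b (injD1 hm inv h1r hassoc hinvr one a) hcd
  have part1 : ∀ p : E × E,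
      ∑ i, u p i • completeLift (leftInvExt m one (b i)) p
        = ∑ i, v p i • completeLift (rightInvExt m one (b i)) p := by
    intro p
    obtain ⟨g, y⟩ := p
    have hw : D2f m (g, one) (∑ i, u (g, y) i • b i) = y := by
      have h0 := hu (g, y)
      simp only [hUfun] at h0
      rw [map_sum]
      simp only [map_smul]
      simpa using h0
    have hw' : D1f m (one, g) (∑ i, v (g, y) i • b i) = y := by
      have h0 := hv (g, y)
      simp only [hVfun] at h0
      rw [map_sum]
      simp only [map_smul]
      simpa using h0
    have hL : ∑ i, u (g, y) i • completeLift (leftInvExt m one (b i)) (g, y)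
        = ((y, fderiv ℝ (fun a => D2f m (a, one) (∑ i, u (g, y) i • b i)) g y) : E × E) := by
      refine Prod.ext_iff.mpr ⟨?_, ?_⟩
      · simp only [completeLift, Prod.fst_sum, Prod.smul_fst]
        simpa using hu (g, y)
      · simp only [completeLift, Prod.snd_sum, Prod.smul_snd]
        have e1 : (fun a => D2f m (a, one) (∑ i, u (g, y) i • b i))
            = fun a => ∑ i, u (g, y) i • D2f m (a, one) (b i) := by
          funext a
          rw [map_sum]
          simp only [map_smul]
        rw [e1, fderiv_fun_sum (fun i _ =>
          (((hUc (b i)).differentiable (by simp) g).fun_const_smul (u (g, y) i)))]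
        simp only [ContinuousLinearMap.sum_apply]
        refine Finset.sum_congr rfl fun i _ => ?_
        rw [hUfun (b i), fderiv_fun_const_smul ((hUc (b i)).differentiable (by simp) g)]
        simp
    have hR : ∑ i, v (g, y) i • completeLift (rightInvExt m one (b i)) (g, y)
        = ((y, fderiv ℝ (fun c => D1f m (one, c) (∑ i, v (g, y) i • b i)) g y) : E × E) := by
      refine Prod.ext_iff.mpr ⟨?_, ?_⟩
      · simp only [completeLift, Prod.fst_sum, Prod.smul_fst]
        simpa using hv (g, y)
      · simp only [completeLift, Prod.snd_sum, Prod.smul_snd]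
        have e1 : (fun c => D1f m (one, c) (∑ i, v (g, y) i • b i))
            = fun c => ∑ i, v (g, y) i • D1f m (one, c) (b i) := by
          funext c
          rw [map_sum]
          simp only [map_smul]
        rw [e1, fderiv_fun_sum (fun i _ =>
          (((hVc (b i)).differentiable (by simp) g).fun_const_smul (v (g, y) i)))]
        simp only [ContinuousLinearMap.sum_apply]
        refine Finset.sum_congr rfl fun i _ => ?_
        rw [hVfun (b i), fderiv_fun_const_smul ((hVc (b i)).differentiable (by simp) g)]
        simp
    rw [hL, hR]
    exact Prod.ext_iff.mpr ⟨rfl, key hm h1l h1r hassoc g y _ _ hw hw'⟩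
  refine ⟨fun p _ => part1 p, ?_, ?_⟩
  -- Part 2: invariance under left translations
  · intro h p _
    have hφ : ContDiff ℝ (⊤ : ℕ∞) (m h) := hm.comp (contDiff_const.prodMk contDiff_id)
    have hlift : ∀ i : Fin n,
        fderiv ℝ (fun q : E × E => ((m h q.1, fderiv ℝ (m h) q.1 q.2) : E × E)) p
          (completeLift (leftInvExt m one (b i)) p)
        = completeLift (leftInvExt m one (b i)) (m h p.1, fderiv ℝ (m h) p.1 p.2) :=
      fun i => lift_inv hφ (hUdiff (b i)) (fun a => hinvU h a (b i)) p
    have hcoe : u (m h p.1, fderiv ℝ (m h) p.1 p.2) = u p := by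
      apply coeffL (m h p.1)
      calc ∑ i, u (m h p.1, fderiv ℝ (m h) p.1 p.2) i • leftInvExt m one (b i) (m h p.1)
          = fderiv ℝ (m h) p.1 p.2 := by
            simpa using hu (m h p.1, fderiv ℝ (m h) p.1 p.2)
        _ = ∑ i, u p i • leftInvExt m one (b i) (m h p.1) := by
            conv_lhs => rw [← hu p]
            rw [map_sum]
            exact Finset.sum_congr rfl fun i _ => by
              rw [map_smul, hinvU h p.1 (b i)]
    rw [map_sum]
    simp only [map_smul]
    rw [hcoe]
    exact Finset.sum_congr rfl fun i _ => by rw [hlift i]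
  -- Part 3: invariance under right translations
  · intro h p hp
    have hφ : ContDiff ℝ (⊤ : ℕ∞) (fun x => m x h) := hm.comp (contDiff_id.prodMk contDiff_const)
    have hlift : ∀ i : Fin n,
        fderiv ℝ (fun q : E × E => ((m q.1 h, fderiv ℝ (fun x => m x h) q.1 q.2) : E × E)) p
          (completeLift (rightInvExt m one (b i)) p)
        = completeLift (rightInvExt m one (b i))
            (m p.1 h, fderiv ℝ (fun x => m x h) p.1 p.2) :=
      fun i => lift_inv hφ (hVdiff (b i)) (fun a => hinvV h a (b i)) p
    have hcoe : v (m p.1 h, fderiv ℝ (fun x => m x h) p.1 p.2) = v p := by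
      apply coeffR (m p.1 h)
      calc ∑ i, v (m p.1 h, fderiv ℝ (fun x => m x h) p.1 p.2) i •
            rightInvExt m one (b i) (m p.1 h)
          = fderiv ℝ (fun x => m x h) p.1 p.2 := by
            simpa using hv (m p.1 h, fderiv ℝ (fun x => m x h) p.1 p.2)
        _ = ∑ i, v p i • rightInvExt m one (b i) (m p.1 h) := by
            conv_lhs => rw [← hv p]
            rw [map_sum]
            exact Finset.sum_congr rfl fun i _ => by
              rw [map_smul, hinvV h p.1 (b i)]
    rw [part1 p]
    rw [map_sum]
    simp only [map_smul]
    calc ∑ i, v p i • fderiv ℝ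
          (fun q : E × E => ((m q.1 h, fderiv ℝ (fun x => m x h) q.1 q.2) : E × E)) p
          (completeLift (rightInvExt m one (b i)) p)
        = ∑ i, v p i • completeLift (rightInvExt m one (b i))
            (m p.1 h, fderiv ℝ (fun x => m x h) p.1 p.2) :=
          Finset.sum_congr rfl fun i _ => by rw [hlift i]
      _ = ∑ i, v (m p.1 h, fderiv ℝ (fun x => m x h) p.1 p.2) i •
            completeLift (rightInvExt m one (b i))
              (m p.1 h, fderiv ℝ (fun x => m x h) p.1 p.2) := by rw [hcoe]
      _ = ∑ i, u (m p.1 h, fderiv ℝ (fun x => m x h) p.1 p.2) i •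
            completeLift (leftInvExt m one (b i))
              (m p.1 h, fderiv ℝ (fun x => m x h) p.1 p.2) :=
          (part1 (m p.1 h, fderiv ℝ (fun x => m x h) p.1 p.2)).symm
end
end

section
/- On a Lie group G, the vector field G_0 = u^i Ũ_i on TG \ 0 is a Berwald spray structure: in any standard local coordinates (x^i, y^i) it has the form y^j ∂_{x^j} - 2G^k ∂_{y^k} where each G^k is a quadratic form in the y-coordinates with coefficients depending smoothly on x. -/
noncomputable section

/-- the canonical field `G₀ = u^i Ũ_i` on `TG \ 0` is a Berwald spray:
in the (global) standard coordinates `(x, y)` on `TG = E × E` it has the form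
`G₀(x,y) = (y, B(x)(y, y))` where `B` is a smooth field of symmetric-type bilinear maps,
i.e. the spray coefficients `-2G^k = B(x)(y,y)` are quadratic forms in `y` with
coefficients depending smoothly on `x`. -/
theorem statement9
    {E : Type*} [NormedAddCommGroup E] [NormedSpace ℝ E] [FiniteDimensional ℝ E]
    {n : ℕ}
    (m : E → E → E) (one : E) (inv : E → E)
    (hm : ContDiff ℝ (⊤ : ℕ∞) (fun p : E × E => m p.1 p.2))
    (hinv : ContDiff ℝ (⊤ : ℕ∞) inv)
    (h1l : ∀ x, m one x = x) (h1r : ∀ x, m x one = x)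
    (hassoc : ∀ a bb cc, m (m a bb) cc = m a (m bb cc))
    (hinvl : ∀ x, m (inv x) x = one) (hinvr : ∀ x, m x (inv x) = one)
    (b : Module.Basis (Fin n) ℝ E)
    (u : E × E → Fin n → ℝ)
    (hu : ∀ p : E × E, ∑ i, u p i • leftInvExt m one (b i) p.1 = p.2) :
    ∃ B : E → E →L[ℝ] E →L[ℝ] E, ContDiff ℝ (⊤ : ℕ∞) B ∧
      ∀ p : E × E, p.2 ≠ 0 →
        ∑ i, u p i • completeLift (leftInvExt m one (b i)) p = (p.2, B p.1 p.2 p.2) := by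
  classical
  -- left translation derivative and its inverse
  set L : E → E →L[ℝ] E := fun x => fderiv ℝ (m x) one with hLdef
  set Linv : E → E →L[ℝ] E := fun x => fderiv ℝ (m (inv x)) x with hLinvdef
  have hma : ∀ a : E, ContDiff ℝ (⊤ : ℕ∞) (m a) := fun a =>
    hm.comp (contDiff_const.prodMk contDiff_id)
  -- Linv x is a left inverse of L x
  have hLi : ∀ x v, Linv x (L x v) = v := by
    intro x v
    have hcomp : (fun z => m (inv x) (m x z)) = id := by
      funext z; simp [← hassoc, hinvl, h1l]
    have h1 : fderiv ℝ (fun z => m (inv x) (m x z)) one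
        = (fderiv ℝ (m (inv x)) (m x one)).comp (fderiv ℝ (m x) one) :=
      fderiv_comp (x := one) (((hma (inv x)).differentiable (by simp)) _)
        (((hma x).differentiable (by simp)) _)
    rw [hcomp, fderiv_id] at h1
    have := congrArg (fun (T : E →L[ℝ] E) => T v) h1.symm
    simpa [hLdef, hLinvdef, h1r x] using this
  -- the left invariant fields
  set U : Fin n → E → E := fun i x => L x (b i) with hUdef
  have hUeq : ∀ i, leftInvExt m one (b i) = U i := fun i => rfl
  have hLsmooth : ContDiff ℝ (⊤ : ℕ∞) L :=
    ContDiff.fderiv (f := fun x z => m x z) (g := fun _ => one) hm contDiff_const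
      (by simp)
  have hUsmooth : ∀ i, ContDiff ℝ (⊤ : ℕ∞) (U i) := fun i =>
    hLsmooth.clm_apply contDiff_const
  have hLinvsmooth : ContDiff ℝ (⊤ : ℕ∞) Linv :=
    ContDiff.fderiv (f := fun x z => m (inv x) z) (g := fun x => x)
      (hm.comp ((hinv.comp contDiff_fst).prodMk contDiff_snd)) contDiff_id (by simp)
  have hψ : ∀ i, ContDiff ℝ (⊤ : ℕ∞) (fun x => fderiv ℝ (U i) x) := fun i =>
    (hUsmooth i).fderiv_right (by simp)
  -- the coordinate functionals
  set c : Fin n → E →L[ℝ] ℝ := fun i => LinearMap.toContinuousLinearMap (b.coord i)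
    with hcdef
  refine ⟨fun x => ∑ i, ((c i).comp (Linv x)).smulRight (fderiv ℝ (U i) x), ?_, ?_⟩
  · exact ContDiff.sum fun i _ =>
      (contDiff_const.clm_comp hLinvsmooth).smulRight (hψ i)
  · rintro ⟨x, y⟩ -
    -- the coordinates u are the b-coordinates of Linv x y
    have hy : L x (∑ i, u (x, y) i • b i) = y := by
      rw [map_sum]
      simpa [hUeq, hUdef] using hu (x, y)
    have hkey : Linv x y = ∑ i, u (x, y) i • b i := by
      have h := hLi x (∑ i, u (x, y) i • b i)
      rw [hy] at h; exact h
    have hui : ∀ i, u (x, y) i = c i (Linv x y) := by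
      intro i
      simp [hcdef, hkey, Module.Basis.coord_apply, Module.Basis.repr_sum_self,
        Finsupp.single_apply, Finset.sum_ite_eq']
    -- compute the sum componentwise
    have h2 : ∑ i, u (x, y) i • completeLift (leftInvExt m one (b i)) (x, y)
        = (∑ i, u (x, y) i • U i x, ∑ i, u (x, y) i • fderiv ℝ (U i) x y) := by
      simp [completeLift, hUeq, Prod.ext_iff, Prod.fst_sum, Prod.snd_sum]
    rw [h2]
    refine Prod.ext ?_ ?_
    · simpa [hUeq, hUdef] using hu (x, y)
    · simp only [ContinuousLinearMap.sum_apply, ContinuousLinearMap.smulRight_apply,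
        ContinuousLinearMap.comp_apply]
      exact Finset.sum_congr rfl fun i _ => by
        rw [hui i, ContinuousLinearMap.smul_apply]
end
end

section
/- Let G be a Lie group and G = G_0 - H a left invariant spray on G, where G_0 is the canonical bi-invariant spray and H = H^i ∂_{u^i} is the vertical left invariant correction. Define the spray vector field η : g \ {0} → g by η(y) = H^i(e, y) e_i. If c(t), t ∈ (a, b) with 0 ∈ (a, b), is a geodesic of G with c(0) = e, then y(t) = (L_{c(t)^{-1}})_* ċ(t) is an integral curve of -η, i.e., ẏ(t) = -η(y(t)). -/
noncomputable section

/-- Partial derivative of a smooth multiplication map in the second variable,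
expressed via the full derivative. -/
lemma aux_hasFDerivAt_mul {E : Type*} [NormedAddCommGroup E] [NormedSpace ℝ E]
    (m : E → E → E) (hm : ContDiff ℝ (⊤ : ℕ∞) (fun p : E × E => m p.1 p.2)) (g x : E) :
    HasFDerivAt (m g)
      ((fderiv ℝ (fun p : E × E => m p.1 p.2) (g, x)).comp (ContinuousLinearMap.inr ℝ E E)) x := by
  have h1 : HasFDerivAt (fun p : E × E => m p.1 p.2)
      (fderiv ℝ (fun p : E × E => m p.1 p.2) (g, x)) (g, x) :=
    (hm.differentiable (by simp) (g, x)).hasFDerivAt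
  have h2 : HasFDerivAt (fun z : E => ((g, z) : E × E)) (ContinuousLinearMap.inr ℝ E E) x :=
    (hasFDerivAt_const g x).prodMk (hasFDerivAt_id x)
  exact h1.comp x h2

/-- Smoothness of maps of the form `d ↦ D(m (α d))(β d) (v d)`. -/
lemma aux_smooth_fderiv_apply {E D : Type*} [NormedAddCommGroup E] [NormedSpace ℝ E]
    [NormedAddCommGroup D] [NormedSpace ℝ D]
    (m : E → E → E) (hm : ContDiff ℝ (⊤ : ℕ∞) (fun p : E × E => m p.1 p.2))
    {α β v : D → E} (hα : ContDiff ℝ (⊤ : ℕ∞) α) (hβ : ContDiff ℝ (⊤ : ℕ∞) β) (hv : ContDiff ℝ (⊤ : ℕ∞) v) :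
    ContDiff ℝ (⊤ : ℕ∞) (fun d => fderiv ℝ (m (α d)) (β d) (v d)) := by
  have heq : (fun d => fderiv ℝ (m (α d)) (β d) (v d))
      = fun d => (fderiv ℝ (fun p : E × E => m p.1 p.2) (α d, β d)) ((0 : E), v d) := by
    funext d
    rw [(aux_hasFDerivAt_mul m hm (α d) (β d)).fderiv]
    rfl
  rw [heq]
  exact ((hm.fderiv_right (by simp)).comp (hα.prodMk hβ)).clm_apply (contDiff_const.prodMk hv)

/-- let `G = G₀ - H` be a left invariant spray on the Lie group `G`
(written in standard coordinates as `G(x,y) = (y, -2 Gc(x,y))`, so that the vertical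
left invariant correction has value `H(e,y) = η(y) = (G₀)₂(e,y) + 2 Gc(e,y)` at the
identity, defining the spray vector field `η : g \ {0} → g`).  If `c : (a,b) → G` is a
geodesic of `G` with `c 0 = e`, then `y(t) = (L_{c(t)⁻¹})_* ċ(t)` is an integral curve
of `-η`, i.e. `ẏ(t) = -η(y(t))`. -/
theorem statement11
    {E : Type*} [NormedAddCommGroup E] [NormedSpace ℝ E] [FiniteDimensional ℝ E]
    {n : ℕ}
    (m : E → E → E) (one : E) (inv : E → E)
    (hm : ContDiff ℝ (⊤ : ℕ∞) (fun p : E × E => m p.1 p.2))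
    (hinv : ContDiff ℝ (⊤ : ℕ∞) inv)
    (h1l : ∀ x, m one x = x) (h1r : ∀ x, m x one = x)
    (hassoc : ∀ a bb cc, m (m a bb) cc = m a (m bb cc))
    (hinvl : ∀ x, m (inv x) x = one) (hinvr : ∀ x, m x (inv x) = one)
    (b : Module.Basis (Fin n) ℝ E)
    (u : E × E → Fin n → ℝ)
    (hu : ∀ p : E × E, ∑ i, u p i • leftInvExt m one (b i) p.1 = p.2)
    (Gc : E → E → E)
    (hGchom : ∀ (x y : E) (t : ℝ), 0 < t → Gc x (t • y) = (t ^ 2) • Gc x y)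
    (hGcsmooth : ∀ p : E × E, p.2 ≠ 0 → ContDiffAt ℝ (⊤ : ℕ∞) (fun q : E × E => Gc q.1 q.2) p)
    (hleftinv : ∀ (h : E) (p : E × E), p.2 ≠ 0 →
      fderiv ℝ (fun q : E × E => ((m h q.1, fderiv ℝ (m h) q.1 q.2) : E × E)) p
          ((p.2, -(2 : ℝ) • Gc p.1 p.2) : E × E)
        = ((fderiv ℝ (m h) p.1 p.2,
            -(2 : ℝ) • Gc (m h p.1) (fderiv ℝ (m h) p.1 p.2)) : E × E))
    (η : E → E)
    (hη : ∀ y : E, y ≠ 0 →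
      η y = (∑ i, u (one, y) i • completeLift (leftInvExt m one (b i)) ((one, y) : E × E)).2
        + (2 : ℝ) • Gc one y)
    (a bb : ℝ) (hab : (0 : ℝ) ∈ Set.Ioo a bb)
    (c : ℝ → E) (hc0 : c 0 = one)
    (hgeo : ∀ t ∈ Set.Ioo a bb, deriv c t ≠ 0 ∧ HasDerivAt c (deriv c t) t ∧
      HasDerivAt (deriv c) (-(2 : ℝ) • Gc (c t) (deriv c t)) t) :
    ∀ t ∈ Set.Ioo a bb,
      HasDerivAt (fun s => fderiv ℝ (m (inv (c s))) (c s) (deriv c s))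
        (-η (fderiv ℝ (m (inv (c t))) (c t) (deriv c t))) t := by
  intro t ht
  obtain ⟨hv0, hcd, hcd2⟩ := hgeo t ht
  -- basic differentiability of left translations
  have hdiff : ∀ g x : E, DifferentiableAt ℝ (m g) x :=
    fun g x => (aux_hasFDerivAt_mul m hm g x).differentiableAt
  have hHD : ∀ g x : E, HasFDerivAt (m g) (fderiv ℝ (m g) x) x :=
    fun g x => (hdiff g x).hasFDerivAt
  have hcomp : ∀ g k x : E,
      HasFDerivAt (fun z => m g (m k z))
        ((fderiv ℝ (m g) (m k x)).comp (fderiv ℝ (m k) x)) x :=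
    fun g k x => (hHD g (m k x)).comp x (hHD k x)
  -- group-theoretic identities
  have hinv_unique : ∀ w g, m w g = one → w = inv g := by
    intro w g hwg
    have h2 := hassoc w g (inv g)
    rw [hwg, h1l, hinvr, h1r] at h2
    exact h2.symm
  have hinv_one : inv one = one := (hinv_unique one one (h1l one)).symm
  have hinv_mul : ∀ g k, inv (m g k) = m (inv k) (inv g) := by
    intro g k
    refine (hinv_unique _ _ ?_).symm
    rw [hassoc, ← hassoc (inv g) g k, hinvl g, h1l]
    exact hinvl k
  have hfun_cancel : ∀ h x : E, (fun z => m (inv (m h x)) (m h z)) = m (inv x) := by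
    intro h x; funext z
    rw [hinv_mul h x, hassoc, ← hassoc (inv h) h z, hinvl h, h1l z]
  have hfun_li : ∀ x : E, (fun z => m (inv x) (m x z)) = fun z => z := by
    intro x; funext z; rw [← hassoc, hinvl, h1l]
  have hfun_ri : ∀ x : E, (fun z => m x (m (inv x) z)) = fun z => z := by
    intro x; funext z; rw [← hassoc, hinvr, h1l]
  have hm_one : m one = fun z => z := funext h1l
  -- the derivative of `m one` is the identity
  have hfid : ∀ x v : E, fderiv ℝ (m one) x v = v := by
    intro x v
    rw [hm_one]
    simp
  -- `D(m (inv x))(x) ∘ D(m x)(one) = id`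
  have hli : ∀ x : E,
      (fderiv ℝ (m (inv x)) x).comp (fderiv ℝ (m x) one) = ContinuousLinearMap.id ℝ E := by
    intro x
    have h3 := hcomp (inv x) x one
    rw [hfun_li x, h1r x] at h3
    exact h3.unique (hasFDerivAt_id one)
  -- `D(m x)(one) ∘ D(m (inv x))(x) = id`
  have hri : ∀ x : E,
      (fderiv ℝ (m x) one).comp (fderiv ℝ (m (inv x)) x) = ContinuousLinearMap.id ℝ E := by
    intro x
    have h3 := hcomp x (inv x) x
    rw [hfun_ri x, hinvl x] at h3
    exact h3.unique (hasFDerivAt_id x)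
  -- Step A: invariance of the "pull back to identity" map
  have hstepA : ∀ h x : E,
      (fderiv ℝ (m (inv (m h x))) (m h x)).comp (fderiv ℝ (m h) x)
        = fderiv ℝ (m (inv x)) x := by
    intro h x
    have h3 := hcomp (inv (m h x)) h x
    rw [hfun_cancel h x] at h3
    exact h3.unique (hHD (inv x) x)
  -- abbreviations
  set x₀ : E := c t with hx0def
  set v₀ : E := deriv c t with hv0def
  set y₀ : E := fderiv ℝ (m (inv x₀)) x₀ v₀ with hy0def
  -- the map Φ : TE → g, Φ(x,v) = D(m (inv x))(x) v, is smooth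
  set Φ : E × E → E := fun p => fderiv ℝ (m (inv p.1)) p.1 p.2 with hΦdef
  have hΦsmooth : ContDiff ℝ (⊤ : ℕ∞) Φ :=
    aux_smooth_fderiv_apply m hm
      ((hinv.comp contDiff_fst : ContDiff ℝ (⊤ : ℕ∞) fun p : E × E => inv p.1))
      contDiff_fst contDiff_snd
  have hΦat : ∀ q : E × E, HasFDerivAt Φ (fderiv ℝ Φ q) q :=
    fun q => (hΦsmooth.differentiable (by simp) q).hasFDerivAt
  -- y₀ ≠ 0
  have hy0ne : y₀ ≠ 0 := by
    intro h0
    apply hv0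
    have h4 : v₀ = ((fderiv ℝ (m x₀) one).comp (fderiv ℝ (m (inv x₀)) x₀)) v₀ := by
      rw [hri x₀]; rfl
    rw [show ((fderiv ℝ (m x₀) one).comp (fderiv ℝ (m (inv x₀)) x₀)) v₀
        = fderiv ℝ (m x₀) one y₀ from rfl, h0] at h4
    simpa using h4
  -- the left translation of the geodesic flow
  set h₀ : E := inv x₀ with hh0def
  set Ψ : E × E → E × E := fun q => (m h₀ q.1, fderiv ℝ (m h₀) q.1 q.2) with hΨdef
  have hΨsmooth : ContDiff ℝ (⊤ : ℕ∞) Ψ := by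
    refine ContDiff.prodMk ?_ ?_
    · exact (hm.comp (contDiff_const.prodMk contDiff_fst) :
        ContDiff ℝ (⊤ : ℕ∞) fun q : E × E => m h₀ q.1)
    · exact aux_smooth_fderiv_apply m hm contDiff_const contDiff_fst contDiff_snd
  have hΦΨ : ∀ q : E × E, Φ (Ψ q) = Φ q := by
    intro q
    show fderiv ℝ (m (inv (m h₀ q.1))) (m h₀ q.1) (fderiv ℝ (m h₀) q.1 q.2)
      = fderiv ℝ (m (inv q.1)) q.1 q.2
    rw [← hstepA h₀ q.1]
    rfl
  -- the chain rule for Φ ∘ Ψ = Φ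
  have hΨat : HasFDerivAt Ψ (fderiv ℝ Ψ (x₀, v₀)) (x₀, v₀) :=
    (hΨsmooth.differentiable (by simp) _).hasFDerivAt
  have hchain : HasFDerivAt (fun q => Φ (Ψ q))
      ((fderiv ℝ Φ (Ψ (x₀, v₀))).comp (fderiv ℝ Ψ (x₀, v₀))) (x₀, v₀) :=
    (hΦat (Ψ (x₀, v₀))).comp (x₀, v₀) hΨat
  rw [funext hΦΨ] at hchain
  have hkey : fderiv ℝ Φ (x₀, v₀)
      = (fderiv ℝ Φ (Ψ (x₀, v₀))).comp (fderiv ℝ Ψ (x₀, v₀)) :=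
    (hΦat (x₀, v₀)).unique hchain
  -- Ψ (x₀, v₀) = (one, y₀)
  have hΨp : Ψ (x₀, v₀) = (one, y₀) := by
    show (m h₀ x₀, fderiv ℝ (m h₀) x₀ v₀) = (one, y₀)
    rw [hh0def, hinvl x₀]
  -- the image of the geodesic vector under DΨ, by left invariance of the spray
  have himg : fderiv ℝ Ψ (x₀, v₀) (v₀, -(2 : ℝ) • Gc x₀ v₀) = (y₀, -(2 : ℝ) • Gc one y₀) := by
    have h5 := hleftinv h₀ (x₀, v₀) hv0
    have h6 : m h₀ x₀ = one := hinvl x₀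
    rw [← h6]
    exact h5
  -- second partial derivative of Φ at (one, y₀) is the identity
  have hE2 : ∀ z : E, (fderiv ℝ Φ (one, y₀)) ((0 : E), z) = z := by
    have hι : HasFDerivAt (fun v : E => ((one, v) : E × E))
        (ContinuousLinearMap.inr ℝ E E) y₀ :=
      (hasFDerivAt_const one y₀).prodMk (hasFDerivAt_id y₀)
    have h3 : HasFDerivAt (fun v : E => Φ (one, v))
        ((fderiv ℝ Φ (one, y₀)).comp (ContinuousLinearMap.inr ℝ E E)) y₀ :=
      (hΦat (one, y₀)).comp y₀ hι
    have hfun : (fun v : E => Φ (one, v)) = fun v => v := by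
      funext v
      show fderiv ℝ (m (inv one)) one v = v
      rw [hinv_one]
      exact hfid one v
    rw [hfun] at h3
    have h4 : (fderiv ℝ Φ (one, y₀)).comp (ContinuousLinearMap.inr ℝ E E)
        = ContinuousLinearMap.id ℝ E := h3.unique (hasFDerivAt_id y₀)
    intro z
    calc (fderiv ℝ Φ (one, y₀)) ((0 : E), z)
        = ((fderiv ℝ Φ (one, y₀)).comp (ContinuousLinearMap.inr ℝ E E)) z := rfl
      _ = z := by rw [h4]; rfl
  -- the left invariant extension of y₀
  set U : E → E := leftInvExt m one y₀ with hUdef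
  have hUsmooth : ContDiff ℝ (⊤ : ℕ∞) U :=
    (aux_smooth_fderiv_apply m hm contDiff_id contDiff_const contDiff_const :
      ContDiff ℝ (⊤ : ℕ∞) fun g : E => fderiv ℝ (m g) one y₀)
  have hUone : U one = y₀ := hfid one y₀
  -- first partial structure: Φ along the graph of U is constant
  have hE3 : ∀ w : E, (fderiv ℝ Φ (one, y₀)) (w, fderiv ℝ U one w) = 0 := by
    have hU' : HasFDerivAt U (fderiv ℝ U one) one :=
      (hUsmooth.differentiable (by simp) one).hasFDerivAt
    have hσ : HasFDerivAt (fun x : E => ((x, U x) : E × E))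
        ((ContinuousLinearMap.id ℝ E).prod (fderiv ℝ U one)) one :=
      (hasFDerivAt_id one).prodMk hU'
    have hΦσ : HasFDerivAt Φ (fderiv ℝ Φ (one, y₀)) ((one : E), U one) := by
      rw [hUone]; exact hΦat (one, y₀)
    have h3 : HasFDerivAt (fun x : E => Φ (x, U x))
        ((fderiv ℝ Φ (one, y₀)).comp
          ((ContinuousLinearMap.id ℝ E).prod (fderiv ℝ U one))) one :=
      by have := hΦσ.comp one hσ; exact this
    have hfunσ : (fun x : E => Φ (x, U x)) = fun _ => y₀ := by
      funext x
      show fderiv ℝ (m (inv x)) x (fderiv ℝ (m x) one y₀) = y₀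
      have h6 : fderiv ℝ (m (inv x)) x (fderiv ℝ (m x) one y₀)
          = ((fderiv ℝ (m (inv x)) x).comp (fderiv ℝ (m x) one)) y₀ := rfl
      rw [h6, hli x]
      rfl
    rw [hfunσ] at h3
    have h4 : (fderiv ℝ Φ (one, y₀)).comp
        ((ContinuousLinearMap.id ℝ E).prod (fderiv ℝ U one)) = 0 :=
      h3.unique (hasFDerivAt_const y₀ one)
    intro w
    calc (fderiv ℝ Φ (one, y₀)) (w, fderiv ℝ U one w)
        = ((fderiv ℝ Φ (one, y₀)).comp
            ((ContinuousLinearMap.id ℝ E).prod (fderiv ℝ U one))) w := rfl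
      _ = 0 := by rw [h4]; rfl
  -- express fderiv U one y₀ via the basis
  have hbione : ∀ i, leftInvExt m one (b i) one = b i := fun i => hfid one (b i)
  have hy0sum : ∑ i, u (one, y₀) i • b i = y₀ := by
    have h7 := hu (one, y₀)
    simpa [hbione] using h7
  have hUfun : U = fun x => ∑ i, u (one, y₀) i • leftInvExt m one (b i) x := by
    funext x
    show fderiv ℝ (m x) one y₀ = ∑ i, u (one, y₀) i • fderiv ℝ (m x) one (b i)
    conv_lhs => rw [← hy0sum]
    simp [map_sum, map_smul]
  have hUisd : ∀ i, HasFDerivAt (leftInvExt m one (b i))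
      (fderiv ℝ (leftInvExt m one (b i)) one) one := by
    intro i
    have hUi : ContDiff ℝ (⊤ : ℕ∞) (leftInvExt m one (b i)) :=
      (aux_smooth_fderiv_apply m hm contDiff_id contDiff_const contDiff_const :
        ContDiff ℝ (⊤ : ℕ∞) fun g : E => fderiv ℝ (m g) one (b i))
    exact (hUi.differentiable (by simp) one).hasFDerivAt
  have hsum : HasFDerivAt (fun x => ∑ i, u (one, y₀) i • leftInvExt m one (b i) x)
      (∑ i, u (one, y₀) i • fderiv ℝ (leftInvExt m one (b i)) one) one :=
    HasFDerivAt.fun_sum (fun i _ => (hUisd i).const_smul _)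
  rw [← hUfun] at hsum
  have hDU : fderiv ℝ U one y₀
      = ∑ i, u (one, y₀) i • fderiv ℝ (leftInvExt m one (b i)) one y₀ := by
    rw [hsum.fderiv]
    simp
  -- compute -η y₀
  have hηval : -η y₀ = -(2 : ℝ) • Gc one y₀ - fderiv ℝ U one y₀ := by
    rw [hη y₀ hy0ne, hDU]
    simp only [completeLift, Prod.smul_mk, Prod.snd_sum, Prod.snd]
    module
  -- assemble: value of DΦ(one,y₀) on the spray vector
  have hval : (fderiv ℝ Φ (one, y₀)) (y₀, -(2 : ℝ) • Gc one y₀) = -η y₀ := by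
    have hsplit : ((y₀, -(2 : ℝ) • Gc one y₀) : E × E)
        = (y₀, fderiv ℝ U one y₀) + ((0 : E), -(2 : ℝ) • Gc one y₀ - fderiv ℝ U one y₀) := by
      apply Prod.ext <;> simp
    rw [hsplit, map_add, hE3 y₀, hE2, hηval, zero_add]
  -- the derivative of the curve s ↦ (c s, deriv c s)
  have hcurve : HasDerivAt (fun s => ((c s, deriv c s) : E × E))
      (v₀, -(2 : ℝ) • Gc x₀ v₀) t := hcd.prodMk hcd2
  have hyD : HasDerivAt (fun s => Φ (c s, deriv c s))
      ((fderiv ℝ Φ (x₀, v₀)) (v₀, -(2 : ℝ) • Gc x₀ v₀)) t :=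
    by have := (hΦat (x₀, v₀)).comp_hasDerivAt t hcurve; exact this
  have hfinal : (fderiv ℝ Φ (x₀, v₀)) (v₀, -(2 : ℝ) • Gc x₀ v₀) = -η y₀ := by
    rw [hkey]
    show (fderiv ℝ Φ (Ψ (x₀, v₀))) ((fderiv ℝ Ψ (x₀, v₀)) (v₀, -(2 : ℝ) • Gc x₀ v₀)) = -η y₀
    rw [himg, hΨp]
    exact hval
  rw [hfinal] at hyD
  exact hyD
end
end

section
/- Let G be a Lie group with Lie algebra g and let y : (a,b) → g \ {0} be a smooth curve with 0 ∈ (a,b). Then the ODE ċ(t) = (L_{c(t)})_* y(t) with initial condition c(0) = e has a unique smooth solution c : (a,b) → G defined on the entire interval (a,b). -/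
noncomputable section

open Set Metric

section LieAux
variable {E : Type*} [NormedAddCommGroup E] [NormedSpace ℝ E]
variable {m : E → E → E} {one : E}

lemma lie_contDiff_left (hm : ContDiff ℝ (⊤ : ℕ∞) (fun p : E × E => m p.1 p.2)) (g : E) :
    ContDiff ℝ (⊤ : ℕ∞) (m g) := hm.comp (contDiff_const.prodMk contDiff_id)

lemma lie_hasFDerivAt (hm : ContDiff ℝ (⊤ : ℕ∞) (fun p : E × E => m p.1 p.2)) (g x : E) :
    HasFDerivAt (m g)
      ((fderiv ℝ (fun p : E × E => m p.1 p.2) (g, x)).comp (ContinuousLinearMap.inr ℝ E E)) x :=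
  ((hm.differentiable (by simp) (g, x)).hasFDerivAt).comp x (hasFDerivAt_prodMk_right g x)

lemma lie_fderiv_left (hm : ContDiff ℝ (⊤ : ℕ∞) (fun p : E × E => m p.1 p.2)) (g x : E) :
    fderiv ℝ (m g) x
      = (fderiv ℝ (fun p : E × E => m p.1 p.2) (g, x)).comp (ContinuousLinearMap.inr ℝ E E) :=
  (lie_hasFDerivAt hm g x).fderiv

lemma lie_A_contDiff (hm : ContDiff ℝ (⊤ : ℕ∞) (fun p : E × E => m p.1 p.2)) :
    ContDiff ℝ (⊤ : ℕ∞) (fun g => fderiv ℝ (m g) one) := by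
  have h : (fun g : E => fderiv ℝ (m g) one)
      = fun g => ((ContinuousLinearMap.compL ℝ E (E × E) E).flip (ContinuousLinearMap.inr ℝ E E))
          (fderiv ℝ (fun p : E × E => m p.1 p.2) (g, one)) := by
    funext g
    rw [lie_fderiv_left hm g one]
    rfl
  rw [h]
  exact ((ContinuousLinearMap.compL ℝ E (E × E) E).flip
    (ContinuousLinearMap.inr ℝ E E)).contDiff.comp
    ((hm.fderiv_right (by simp)).comp (contDiff_id.prodMk contDiff_const))

lemma lie_chain (hm : ContDiff ℝ (⊤ : ℕ∞) (fun p : E × E => m p.1 p.2))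
    (h1r : ∀ x, m x one = x) (hassoc : ∀ a b c, m (m a b) c = m a (m b c)) (g x : E) :
    fderiv ℝ (m (m g x)) one = (fderiv ℝ (m g) x).comp (fderiv ℝ (m x) one) := by
  have hfun : m (m g x) = (m g) ∘ (m x) := funext fun z => hassoc g x z
  rw [hfun, fderiv_comp (x := one) ((lie_contDiff_left hm g).differentiable (by simp) _)
    ((lie_contDiff_left hm x).differentiable (by simp) _), h1r]

lemma lie_translate (hm : ContDiff ℝ (⊤ : ℕ∞) (fun p : E × E => m p.1 p.2))
    (h1r : ∀ x, m x one = x) (hassoc : ∀ a b c, m (m a b) c = m a (m b c))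
    {y d : ℝ → E} {u : ℝ} (g : E)
    (hd : HasDerivAt d (fderiv ℝ (m (d u)) one (y u)) u) :
    HasDerivAt (fun t => m g (d t)) (fderiv ℝ (m (m g (d u))) one (y u)) u := by
  have h1 := (((lie_contDiff_left hm g).differentiable (by simp) (d u)).hasFDerivAt).comp_hasDerivAt u hd
  rw [lie_chain hm h1r hassoc g (d u)]
  exact h1

end LieAux

section LieAux2
variable {E : Type*} [NormedAddCommGroup E] [NormedSpace ℝ E] [FiniteDimensional ℝ E]
variable {m : E → E → E} {one : E}


/-- Uniform Lipschitz constant in space, on a compact time interval and a ball. -/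
lemma lie_lipschitz (hm : ContDiff ℝ (⊤ : ℕ∞) (fun p : E × E => m p.1 p.2))
    {a bb : ℝ} {y : ℝ → E} (hy : ContDiffOn ℝ (⊤ : ℕ∞) y (Ioo a bb))
    {p q : ℝ} (hpq : Icc p q ⊆ Ioo a bb) (c : E) (R : ℝ) :
    ∃ K : NNReal, ∀ t ∈ Icc p q,
      LipschitzOnWith K (fun x => fderiv ℝ (m x) one (y t)) (closedBall c R) := by
  have hA : ContDiff ℝ (⊤ : ℕ∞) (fun g : E => fderiv ℝ (m g) one) := lie_A_contDiff (one := one) hm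
  -- Lipschitz constant for A on the ball
  obtain ⟨C₁, hC₁⟩ := (isCompact_closedBall c R).exists_bound_of_continuousOn
    ((hA.fderiv_right (m := (⊤ : ℕ∞)) (by simp)).continuous.continuousOn)
  set K₁ : NNReal := (max C₁ 0).toNNReal with hK₁
  have hlipA : LipschitzOnWith K₁ (fun g : E => fderiv ℝ (m g) one) (closedBall c R) := by
    refine (convex_closedBall c R).lipschitzOnWith_of_nnnorm_fderiv_le
      (fun x _ => (hA.differentiable (by simp)).differentiableAt) (fun x hx => ?_)
    rw [← NNReal.coe_le_coe]
    have : (K₁ : ℝ) = max C₁ 0 := Real.coe_toNNReal _ (le_max_right _ _)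
    rw [this]
    exact le_trans (hC₁ x hx) (le_max_left _ _)
  -- bound for y on the time interval
  obtain ⟨Cy, hCy⟩ := isCompact_Icc.exists_bound_of_continuousOn
    ((hy.continuousOn).mono hpq)
  set Ky : NNReal := (max Cy 0).toNNReal with hKy
  have hKyr : (Ky : ℝ) = max Cy 0 := Real.coe_toNNReal _ (le_max_right _ _)
  refine ⟨K₁ * Ky, fun t ht => LipschitzOnWith.of_dist_le_mul fun x hx x' hx' => ?_⟩
  have h1 : dist (fderiv ℝ (m x) one (y t)) (fderiv ℝ (m x') one (y t))
      ≤ ‖fderiv ℝ (m x) one - fderiv ℝ (m x') one‖ * ‖y t‖ := by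
    rw [dist_eq_norm]
    exact le_trans (le_of_eq (by rw [ContinuousLinearMap.sub_apply]))
      ((fderiv ℝ (m x) one - fderiv ℝ (m x') one).le_opNorm (y t))
  have h2 : ‖fderiv ℝ (m x) one - fderiv ℝ (m x') one‖ ≤ (K₁ : ℝ) * dist x x' := by
    have := hlipA.dist_le_mul x hx x' hx'
    rwa [dist_eq_norm] at this
  have h3 : ‖y t‖ ≤ (Ky : ℝ) := by
    rw [hKyr]; exact le_trans (hCy t ht) (le_max_left _ _)
  calc dist (fderiv ℝ (m x) one (y t)) (fderiv ℝ (m x') one (y t))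
      ≤ ((K₁ : ℝ) * dist x x') * (Ky : ℝ) := by
        apply le_trans h1
        apply mul_le_mul h2 h3 (norm_nonneg _)
        positivity
    _ = ((K₁ * Ky : NNReal) : ℝ) * dist x x' := by push_cast; ring

/-- Uniform bound on the vector field on a compact time interval and a ball. -/
lemma lie_bound (hm : ContDiff ℝ (⊤ : ℕ∞) (fun p : E × E => m p.1 p.2))
    {a bb : ℝ} {y : ℝ → E} (hy : ContDiffOn ℝ (⊤ : ℕ∞) y (Ioo a bb))
    {p q : ℝ} (hpq : Icc p q ⊆ Ioo a bb) (c : E) (R : ℝ) :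
    ∃ C : ℝ, 0 ≤ C ∧ ∀ t ∈ Icc p q, ∀ x ∈ closedBall c R,
      ‖fderiv ℝ (m x) one (y t)‖ ≤ C := by
  have hA : ContDiff ℝ (⊤ : ℕ∞) (fun g : E => fderiv ℝ (m g) one) := lie_A_contDiff (one := one) hm
  obtain ⟨CA, hCA⟩ := (isCompact_closedBall c R).exists_bound_of_continuousOn
    hA.continuous.continuousOn
  obtain ⟨Cy, hCy⟩ := isCompact_Icc.exists_bound_of_continuousOn ((hy.continuousOn).mono hpq)
  refine ⟨(max CA 0) * (max Cy 0), by positivity, fun t ht x hx => ?_⟩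
  calc ‖fderiv ℝ (m x) one (y t)‖ ≤ ‖fderiv ℝ (m x) one‖ * ‖y t‖ :=
        (fderiv ℝ (m x) one).le_opNorm (y t)
    _ ≤ (max CA 0) * (max Cy 0) := by
        apply mul_le_mul (le_trans (hCA x hx) (le_max_left _ _))
          (le_trans (hCy t ht) (le_max_left _ _)) (norm_nonneg _)
        positivity

/-- Local existence. -/
lemma lie_local (hm : ContDiff ℝ (⊤ : ℕ∞) (fun p : E × E => m p.1 p.2))
    {a bb : ℝ} {y : ℝ → E} (hy : ContDiffOn ℝ (⊤ : ℕ∞) y (Ioo a bb))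
    {t₀ : ℝ} (ht₀ : t₀ ∈ Ioo a bb) (x₀ : E) :
    ∃ ε > (0:ℝ), Ioo (t₀ - ε) (t₀ + ε) ⊆ Ioo a bb ∧ ∃ f : ℝ → E, f t₀ = x₀ ∧
      ∀ t ∈ Ioo (t₀ - ε) (t₀ + ε), HasDerivAt f (fderiv ℝ (m (f t)) one (y t)) t := by
  set δ₀ : ℝ := min (t₀ - a) (bb - t₀) / 2 with hδ₀def
  have hδ₀ : 0 < δ₀ := by
    have := ht₀.1; have := ht₀.2
    apply div_pos (lt_min (by linarith) (by linarith)) two_pos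
  have hIccsub : Icc (t₀ - δ₀) (t₀ + δ₀) ⊆ Ioo a bb := by
    intro u hu
    have h1 : δ₀ ≤ (t₀ - a) / 2 := by
      rw [hδ₀def]; gcongr; exact min_le_left _ _
    have h2 : δ₀ ≤ (bb - t₀) / 2 := by
      rw [hδ₀def]; gcongr; exact min_le_right _ _
    constructor
    · have := hu.1; have := ht₀.1; linarith
    · have := hu.2; have := ht₀.2; linarith
  obtain ⟨K, hK⟩ := lie_lipschitz (one := one) hm hy hIccsub x₀ 1
  obtain ⟨C, hC0, hC⟩ := lie_bound (one := one) hm hy hIccsub x₀ 1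
  set ε : ℝ := min δ₀ (1 / (C + 1)) with hεdef
  have hε : 0 < ε := lt_min hδ₀ (by positivity)
  have hεδ : ε ≤ δ₀ := min_le_left _ _
  have hsub' : Icc (t₀ - ε) (t₀ + ε) ⊆ Icc (t₀ - δ₀) (t₀ + δ₀) :=
    Icc_subset_Icc (by linarith) (by linarith)
  have hpl : IsPicardLindelof (fun t x => fderiv ℝ (m x) one (y t))
      (tmin := t₀ - ε) (tmax := t₀ + ε) ⟨t₀, show t₀ ∈ Icc (t₀ - ε) (t₀ + ε) from ⟨by linarith, by linarith⟩⟩ x₀ 1 0 C.toNNReal K := by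
    constructor
    · exact fun t ht => hK t (hsub' ht)
    · intro x hx
      have : ContinuousOn y (Icc (t₀ - ε) (t₀ + ε)) :=
        (hy.continuousOn).mono (le_trans hsub' hIccsub)
      exact (fderiv ℝ (m x) one).continuous.comp_continuousOn this
    · exact fun t ht x hx => (hC t (hsub' ht) x hx).trans (Real.le_coe_toNNReal C)
    · rw [Real.coe_toNNReal _ hC0, NNReal.coe_one, NNReal.coe_zero, sub_zero]
      show C * max (t₀ + ε - t₀) (t₀ - (t₀ - ε)) ≤ 1
      have hmax : max (t₀ + ε - t₀) (t₀ - (t₀ - ε)) = ε := by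
        rw [add_sub_cancel_left, sub_sub_cancel, max_self]
      rw [hmax]
      have hε2 : ε ≤ 1 / (C + 1) := min_le_right _ _
      have : C * ε ≤ C * (1 / (C + 1)) :=
        mul_le_mul_of_nonneg_left hε2 hC0
      apply le_trans this
      rw [mul_one_div]
      rw [div_le_one (by linarith)]
      linarith
  obtain ⟨f, hf0, hf⟩ := hpl.exists_eq_forall_mem_Icc_hasDerivWithinAt₀
  refine ⟨ε, hε, fun u hu => hIccsub (hsub' (Ioo_subset_Icc_self hu)), f, hf0, fun t ht => ?_⟩
  exact (hf t (Ioo_subset_Icc_self ht)).hasDerivAt (Icc_mem_nhds ht.1 ht.2)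

/-- Uniqueness on an open interval. -/
lemma lie_uniq (hm : ContDiff ℝ (⊤ : ℕ∞) (fun p : E × E => m p.1 p.2))
    {a bb : ℝ} {y : ℝ → E} (hy : ContDiffOn ℝ (⊤ : ℕ∞) y (Ioo a bb))
    {p q t₀ : ℝ} (hpq : Ioo p q ⊆ Ioo a bb) (ht₀ : t₀ ∈ Ioo p q) {f g : ℝ → E}
    (hf : ∀ u ∈ Ioo p q, HasDerivAt f (fderiv ℝ (m (f u)) one (y u)) u)
    (hg : ∀ u ∈ Ioo p q, HasDerivAt g (fderiv ℝ (m (g u)) one (y u)) u)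
    (heq : f t₀ = g t₀) : EqOn f g (Ioo p q) := by
  intro t ht
  set α : ℝ := min t₀ t with hα
  set β : ℝ := max t₀ t with hβ
  have hαmem : α ∈ Ioo p q := by
    rcases min_cases t₀ t with ⟨h, _⟩ | ⟨h, _⟩ <;> rw [hα, h] <;> assumption
  have hβmem : β ∈ Ioo p q := by
    rcases max_cases t₀ t with ⟨h, _⟩ | ⟨h, _⟩ <;> rw [hβ, h] <;> assumption
  set p' : ℝ := (p + α) / 2 with hp'
  set q' : ℝ := (β + q) / 2 with hq'
  have hpp' : p < p' := by have := hαmem.1; rw [hp']; linarith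
  have hp'α : p' < α := by have := hαmem.1; rw [hp']; linarith
  have hβq' : β < q' := by have := hβmem.2; rw [hq']; linarith
  have hq'q : q' < q := by have := hβmem.2; rw [hq']; linarith
  have hIccsub : Icc p' q' ⊆ Ioo p q := fun u hu =>
    ⟨lt_of_lt_of_le hpp' hu.1, lt_of_le_of_lt hu.2 hq'q⟩
  have ht₀' : t₀ ∈ Ioo p' q' :=
    ⟨lt_of_lt_of_le hp'α (min_le_left _ _), lt_of_le_of_lt (le_max_left _ _) hβq'⟩
  have ht' : t ∈ Ioo p' q' :=
    ⟨lt_of_lt_of_le hp'α (min_le_right _ _), lt_of_le_of_lt (le_max_right _ _) hβq'⟩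
  -- bound the trajectories
  have hfc : ContinuousOn f (Icc p' q') := continuousOn_of_forall_continuousAt
    (fun u hu => (hf u (hIccsub hu)).continuousAt)
  have hgc : ContinuousOn g (Icc p' q') := continuousOn_of_forall_continuousAt
    (fun u hu => (hg u (hIccsub hu)).continuousAt)
  obtain ⟨Cf, hCf⟩ := isCompact_Icc.exists_bound_of_continuousOn hfc
  obtain ⟨Cg, hCg⟩ := isCompact_Icc.exists_bound_of_continuousOn hgc
  set R : ℝ := max Cf Cg with hR
  obtain ⟨K, hK⟩ := lie_lipschitz (one := one) hm hy (le_trans hIccsub hpq) (0:E) R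
  set s : ℝ → Set E := fun u => if u ∈ Icc p' q' then closedBall (0:E) R else ∅ with hs
  have hv : ∀ u, LipschitzOnWith K (fun x => fderiv ℝ (m x) one (y u)) (s u) := by
    intro u
    rw [hs]
    by_cases h : u ∈ Icc p' q'
    · simpa [h] using hK u h
    · simp [h]
  have key := ODE_solution_unique_of_mem_Ioo (fun u _ => hv u) (t₀ := t₀) (a := p') (b := q') ht₀'
    (f := f) (g := g) ?_ ?_ heq
  · exact key ht'
  · intro u hu
    refine ⟨hf u (hIccsub (Ioo_subset_Icc_self hu)), ?_⟩
    rw [hs]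
    simp only [Ioo_subset_Icc_self hu, if_pos]
    rw [mem_closedBall_zero_iff]
    exact le_trans (hCf u (Ioo_subset_Icc_self hu)) (le_max_left _ _)
  · intro u hu
    refine ⟨hg u (hIccsub (Ioo_subset_Icc_self hu)), ?_⟩
    rw [hs]
    simp only [Ioo_subset_Icc_self hu, if_pos]
    rw [mem_closedBall_zero_iff]
    exact le_trans (hCg u (Ioo_subset_Icc_self hu)) (le_max_right _ _)

end LieAux2

section LieAux3
variable {E : Type*} [NormedAddCommGroup E] [NormedSpace ℝ E] [FiniteDimensional ℝ E]

def lieP (m : E → E → E) (one : E) (y : ℝ → E) (a bb T : ℝ) : Prop :=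
  ∃ p q f, Set.Ioo p q ⊆ Set.Ioo a bb ∧ (0:ℝ) ∈ Set.Ioo p q ∧ T ∈ Set.Ioo p q ∧ f 0 = one ∧
    ∀ u ∈ Set.Ioo p q, HasDerivAt f (fderiv ℝ (m (f u)) one (y u)) u

variable {m : E → E → E} {one : E} {inv : E → E}

lemma lie_forward (hm : ContDiff ℝ (⊤ : ℕ∞) (fun p : E × E => m p.1 p.2))
    (h1r : ∀ x, m x one = x) (hassoc : ∀ a b c, m (m a b) c = m a (m b c))
    (hinvl : ∀ x, m (inv x) x = one)
    {a bb : ℝ} (hab : (0:ℝ) ∈ Ioo a bb) {y : ℝ → E} (hy : ContDiffOn ℝ (⊤ : ℕ∞) y (Ioo a bb)) :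
    ∀ T ∈ Ioo a bb, 0 ≤ T → lieP m one y a bb T := by
  by_contra hcon
  push_neg at hcon
  obtain ⟨T₀, hT₀mem, hT₀pos, hT₀bad⟩ := hcon
  set B : Set ℝ := {t | t ∈ Ioo a bb ∧ 0 ≤ t ∧ ¬ lieP m one y a bb t} with hBdef
  have hBne : B.Nonempty := ⟨T₀, hT₀mem, hT₀pos, hT₀bad⟩
  have hBbd : BddBelow B := ⟨0, fun t ht => ht.2.1⟩
  set T := sInf B with hTdef
  have hT0 : 0 ≤ T := le_csInf hBne (fun t ht => ht.2.1)
  have hTlt : T < bb := lt_of_le_of_lt (csInf_le hBbd ⟨hT₀mem, hT₀pos, hT₀bad⟩) hT₀mem.2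
  have hTmem : T ∈ Ioo a bb := ⟨lt_of_lt_of_le hab.1 hT0, hTlt⟩
  have hgood : ∀ t, t ∈ Ioo a bb → 0 ≤ t → t < T → lieP m one y a bb t := by
    intro t h1 h2 h3
    by_contra hbad
    exact absurd (csInf_le hBbd ⟨h1, h2, hbad⟩) (not_le.2 h3)
  have hPT : lieP m one y a bb T := by
    obtain ⟨ε, hε, hsub, d, hd0, hdsol⟩ := lie_local hm hy hTmem one
    have hbounds := (Set.Ioo_subset_Ioo_iff (by linarith : T - ε < T + ε)).1 hsub
    rcases eq_or_lt_of_le hT0 with hT0eq | hTpos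
    · exact ⟨T - ε, T + ε, d, hsub, ⟨by linarith, by linarith⟩, ⟨by linarith, by linarith⟩,
        by rw [hT0eq]; exact hd0, hdsol⟩
    · set s : ℝ := max 0 (T - ε/2) with hsdef
      have hs0 : 0 ≤ s := le_max_left _ _
      have hsT : s < T := max_lt hTpos (by linarith)
      have hsε : T - ε < s := lt_of_lt_of_le (by linarith) (le_max_right _ _)
      have hsmem : s ∈ Ioo a bb := ⟨lt_of_lt_of_le hab.1 hs0, lt_trans hsT hTlt⟩
      obtain ⟨p, q, f, hpq, h0mem, hsmem', hf0, hfsol⟩ := hgood s hsmem hs0 hsT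
      by_cases hTq : T < q
      · exact ⟨p, q, f, hpq, h0mem, ⟨lt_of_lt_of_le h0mem.1 hT0, hTq⟩, hf0, hfsol⟩
      · have hqT : q ≤ T := not_lt.1 hTq
        have hpqbounds := (Set.Ioo_subset_Ioo_iff (lt_trans h0mem.1 h0mem.2)).1 hpq
        set g₀ : E := m (f s) (inv (d s)) with hg₀def
        set c₂ : ℝ → E := fun u => m g₀ (d u) with hc₂def
        have hc₂sol : ∀ u ∈ Ioo (T - ε) (T + ε),
            HasDerivAt c₂ (fderiv ℝ (m (c₂ u)) one (y u)) u :=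
          fun u hu => lie_translate hm h1r hassoc g₀ (hdsol u hu)
        have hc₂s : c₂ s = f s := by
          show m (m (f s) (inv (d s))) (d s) = f s
          rw [hassoc, hinvl, h1r]
        set p₁ : ℝ := max p (T - ε) with hp₁def
        have hsO : s ∈ Ioo p₁ q := ⟨max_lt hsmem'.1 hsε, hsmem'.2⟩
        have hO1 : Ioo p₁ q ⊆ Ioo p q := Ioo_subset_Ioo (le_max_left _ _) le_rfl
        have hO2 : Ioo p₁ q ⊆ Ioo (T - ε) (T + ε) :=
          Ioo_subset_Ioo (le_max_right _ _) (by linarith)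
        have hOsub : Ioo p₁ q ⊆ Ioo a bb := fun u hu => hpq (hO1 hu)
        have heqO : EqOn f c₂ (Ioo p₁ q) := lie_uniq hm hy hOsub hsO
          (fun u hu => hfsol u (hO1 hu)) (fun u hu => hc₂sol u (hO2 hu)) hc₂s.symm
        set h : ℝ → E := fun u => if u < q then f u else c₂ u with hhdef
        have hh0 : h 0 = one := by
          simp only [hhdef]
          rw [if_pos h0mem.2]
          exact hf0
        refine ⟨p, T + ε, h, ?_, ⟨h0mem.1, by linarith⟩,
          ⟨lt_of_lt_of_le (lt_of_lt_of_le h0mem.1 hs0) (le_of_lt hsT), by linarith⟩, hh0, ?_⟩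
        · intro u hu
          exact ⟨lt_of_le_of_lt hpqbounds.1 hu.1, lt_of_lt_of_le hu.2 hbounds.2⟩
        · intro u hu
          by_cases huq : u < q
          · have hhu : h u = f u := by simp only [hhdef]; exact if_pos huq
            rw [hhu]
            exact (hfsol u ⟨hu.1, huq⟩).congr_of_eventuallyEq
              (Filter.eventuallyEq_of_mem (Iio_mem_nhds huq)
                (fun v hv => by simp only [hhdef]; exact if_pos hv))
          · have huq' : q ≤ u := not_lt.1 huq
            have humem : u ∈ Ioo (T - ε) (T + ε) :=
              ⟨lt_of_lt_of_le (lt_trans hsε hsO.2) huq', hu.2⟩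
            have hnb : Ioo p₁ (T + ε) ∈ nhds u :=
              Ioo_mem_nhds (lt_of_lt_of_le (lt_trans hsO.1 hsO.2) huq') hu.2
            have hev : h =ᶠ[nhds u] c₂ := Filter.eventuallyEq_of_mem hnb (fun v hv => by
              by_cases hvq : v < q
              · have hvO : v ∈ Ioo p₁ q := ⟨hv.1, hvq⟩
                simp only [hhdef]
                rw [if_pos hvq]
                exact heqO hvO
              · simp only [hhdef]
                exact if_neg hvq)
            have hhu : h u = c₂ u := by simp only [hhdef]; exact if_neg huq
            rw [hhu]
            exact (hc₂sol u humem).congr_of_eventuallyEq hev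
  obtain ⟨p, q, f, hpq, h0, hT, hf0, hsol⟩ := hPT
  obtain ⟨tb, htbB, htbq⟩ := (csInf_lt_iff hBbd hBne).1 (show sInf B < q from hT.2)
  have htbT : T ≤ tb := csInf_le hBbd htbB
  exact htbB.2.2 ⟨p, q, f, hpq, h0, ⟨lt_of_lt_of_le hT.1 htbT, htbq⟩, hf0, hsol⟩

end LieAux3

/-- for a smooth curve `y : (a,b) → g \ {0}` with `0 ∈ (a,b)`, the ODE
`ċ(t) = (L_{c(t)})_* y(t)`, `c(0) = e`, has a solution defined on all of `(a,b)`, and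
any two solutions agree on `(a,b)`. -/
theorem statement12
    {E : Type*} [NormedAddCommGroup E] [NormedSpace ℝ E] [FiniteDimensional ℝ E]
    (m : E → E → E) (one : E) (inv : E → E)
    (hm : ContDiff ℝ (⊤ : ℕ∞) (fun p : E × E => m p.1 p.2))
    (hinv : ContDiff ℝ (⊤ : ℕ∞) inv)
    (h1l : ∀ x, m one x = x) (h1r : ∀ x, m x one = x)
    (hassoc : ∀ a bb cc, m (m a bb) cc = m a (m bb cc))
    (hinvl : ∀ x, m (inv x) x = one) (hinvr : ∀ x, m x (inv x) = one)
    (a bb : ℝ) (hab : (0 : ℝ) ∈ Set.Ioo a bb)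
    (y : ℝ → E)
    (hysmooth : ContDiffOn ℝ (⊤ : ℕ∞) y (Set.Ioo a bb))
    (hyne : ∀ t ∈ Set.Ioo a bb, y t ≠ 0) :
    ∃ c : ℝ → E, c 0 = one ∧
      (∀ t ∈ Set.Ioo a bb, HasDerivAt c (fderiv ℝ (m (c t)) one (y t)) t) ∧
      ∀ c' : ℝ → E, c' 0 = one →
        (∀ t ∈ Set.Ioo a bb, HasDerivAt c' (fderiv ℝ (m (c' t)) one (y t)) t) →
        Set.EqOn c c' (Set.Ioo a bb) := by
  -- reflected data
  have hab' : (0:ℝ) ∈ Ioo (-bb) (-a) := ⟨by linarith [hab.2], by linarith [hab.1]⟩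
  have hmaps : MapsTo (fun u : ℝ => -u) (Ioo (-bb) (-a)) (Ioo a bb) := by
    intro u hu
    simp only [mem_Ioo] at hu ⊢
    constructor <;> linarith [hu.1, hu.2]
  have hy' : ContDiffOn ℝ (⊤ : ℕ∞) (fun t : ℝ => -y (-t)) (Ioo (-bb) (-a)) :=
    (hysmooth.comp (contDiff_neg.contDiffOn) hmaps).neg
  -- all times are reachable
  have hPall : ∀ t ∈ Ioo a bb, lieP m one y a bb t := by
    intro t ht
    rcases le_or_gt 0 t with h0t | ht0
    · exact lie_forward hm h1r hassoc hinvl hab hysmooth t ht h0t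
    · have hmem : -t ∈ Ioo (-bb) (-a) := ⟨by linarith [ht.2], by linarith [ht.1]⟩
      obtain ⟨p, q, ft, hsub, h0, hTmem, hf0, hsol⟩ :=
        lie_forward hm h1r hassoc hinvl hab' hy' (-t) hmem (by linarith)
      refine ⟨-q, -p, fun u => ft (-u), ?_, ⟨by linarith [h0.2], by linarith [h0.1]⟩,
        ⟨by linarith [hTmem.2], by linarith [hTmem.1]⟩, by simpa using hf0, ?_⟩
      · intro u hu
        have h1 : -u ∈ Ioo p q := ⟨by linarith [hu.2], by linarith [hu.1]⟩
        have h2 := hsub h1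
        exact ⟨by linarith [h2.2], by linarith [h2.1]⟩
      · intro u hu
        have hmem' : -u ∈ Ioo p q := ⟨by linarith [hu.2], by linarith [hu.1]⟩
        have h1 := hsol (-u) hmem'
        have h2 := h1.scomp u (hasDerivAt_neg u)
        simp only [Function.comp_def, neg_neg, map_neg, smul_neg, neg_smul, one_smul,
          neg_neg] at h2
        exact h2
  -- choose local solutions
  have hPall' : ∀ t : ℝ, ∃ (p q : ℝ) (f : ℝ → E), t ∈ Ioo a bb →
      Ioo p q ⊆ Ioo a bb ∧ (0:ℝ) ∈ Ioo p q ∧ t ∈ Ioo p q ∧ f 0 = one ∧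
        ∀ u ∈ Ioo p q, HasDerivAt f (fderiv ℝ (m (f u)) one (y u)) u := by
    intro t
    by_cases ht : t ∈ Ioo a bb
    · obtain ⟨p, q, f, h1, h2, h3, h4, h5⟩ := hPall t ht
      exact ⟨p, q, f, fun _ => ⟨h1, h2, h3, h4, h5⟩⟩
    · exact ⟨0, 0, fun _ => one, fun h => absurd h ht⟩
  choose P Q F hF using hPall'
  refine ⟨fun t => F t t, (hF 0 hab).2.2.2.1, ?_, ?_⟩
  case _ =>
    -- derivative
    intro t ht
    obtain ⟨hsub_t, h0t, htt, hf0t, hsolt⟩ := hF t ht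
    have hagree : ∀ u ∈ Ioo (P t) (Q t), F t u = F u u := by
      intro u hu
      have hu_mem : u ∈ Ioo a bb := hsub_t hu
      obtain ⟨hsub_u, h0u, huu, hf0u, hsolu⟩ := hF u hu_mem
      have h0 : (0:ℝ) ∈ Ioo (max (P t) (P u)) (min (Q t) (Q u)) :=
        ⟨max_lt h0t.1 h0u.1, lt_min h0t.2 h0u.2⟩
      have hiu : u ∈ Ioo (max (P t) (P u)) (min (Q t) (Q u)) :=
        ⟨max_lt hu.1 huu.1, lt_min hu.2 huu.2⟩
      have hsub₂t : Ioo (max (P t) (P u)) (min (Q t) (Q u)) ⊆ Ioo (P t) (Q t) :=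
        Ioo_subset_Ioo (le_max_left _ _) (min_le_left _ _)
      have hsub₂u : Ioo (max (P t) (P u)) (min (Q t) (Q u)) ⊆ Ioo (P u) (Q u) :=
        Ioo_subset_Ioo (le_max_right _ _) (min_le_right _ _)
      exact lie_uniq hm hysmooth (fun v hv => hsub_t (hsub₂t hv)) h0
        (fun v hv => hsolt v (hsub₂t hv)) (fun v hv => hsolu v (hsub₂u hv))
        (hf0t.trans hf0u.symm) hiu
    have hev : (fun u => F u u) =ᶠ[nhds t] F t :=
      Filter.eventuallyEq_of_mem (Ioo_mem_nhds htt.1 htt.2)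
        (fun u hu => (hagree u hu).symm)
    exact (hsolt t htt).congr_of_eventuallyEq hev
  case _ =>
    -- uniqueness
    intro c' hc'0 hc'sol
    refine lie_uniq hm hysmooth (subset_refl _) hab ?_ hc'sol ?_
    · intro t ht
      obtain ⟨hsub_t, h0t, htt, hf0t, hsolt⟩ := hF t ht
      have hagree : ∀ u ∈ Ioo (P t) (Q t), F t u = F u u := by
        intro u hu
        have hu_mem : u ∈ Ioo a bb := hsub_t hu
        obtain ⟨hsub_u, h0u, huu, hf0u, hsolu⟩ := hF u hu_mem
        have h0 : (0:ℝ) ∈ Ioo (max (P t) (P u)) (min (Q t) (Q u)) :=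
          ⟨max_lt h0t.1 h0u.1, lt_min h0t.2 h0u.2⟩
        have hiu : u ∈ Ioo (max (P t) (P u)) (min (Q t) (Q u)) :=
          ⟨max_lt hu.1 huu.1, lt_min hu.2 huu.2⟩
        have hsub₂t : Ioo (max (P t) (P u)) (min (Q t) (Q u)) ⊆ Ioo (P t) (Q t) :=
          Ioo_subset_Ioo (le_max_left _ _) (min_le_left _ _)
        have hsub₂u : Ioo (max (P t) (P u)) (min (Q t) (Q u)) ⊆ Ioo (P u) (Q u) :=
          Ioo_subset_Ioo (le_max_right _ _) (min_le_right _ _)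
        exact lie_uniq hm hysmooth (fun v hv => hsub_t (hsub₂t hv)) h0
          (fun v hv => hsolt v (hsub₂t hv)) (fun v hv => hsolu v (hsub₂u hv))
          (hf0t.trans hf0u.symm) hiu
      have hev : (fun u => F u u) =ᶠ[nhds t] F t :=
        Filter.eventuallyEq_of_mem (Ioo_mem_nhds htt.1 htt.2)
          (fun u hu => (hagree u hu).symm)
      exact (hsolt t htt).congr_of_eventuallyEq hev
    · rw [hc'0]; exact (hF 0 hab).2.2.2.1
end
end

section
/- Let G be a Lie group with a left invariant spray G = G_0 - H and spray vector field η : g \ {0} → g. For any open interval (a,b) containing 0, the map c ↦ y, y(t) = (L_{c(t)^{-1}})_* ċ(t), is a bijection between the set of geodesics c : (a,b) → G of G with c(0) = e, and the set of integral curves y : (a,b) → g \ {0} of -η. -/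
noncomputable section
set_option linter.unusedSectionVars false
set_option maxHeartbeats 1000000
open Set

structure GD (E : Type*) [NormedAddCommGroup E] [NormedSpace ℝ E] where
  m : E → E → E
  one : E
  inv : E → E
  hm : ContDiff ℝ (⊤ : ℕ∞) (fun p : E × E => m p.1 p.2)
  hinv : ContDiff ℝ (⊤ : ℕ∞) inv
  h1l : ∀ x, m one x = x
  h1r : ∀ x, m x one = x
  hassoc : ∀ a b c, m (m a b) c = m a (m b c)
  hinvl : ∀ x, m (inv x) x = one
  hinvr : ∀ x, m x (inv x) = one

namespace GD
variable {E : Type*} [NormedAddCommGroup E] [NormedSpace ℝ E] (G : GD E)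

def A (g : E) : E →L[ℝ] E := fderiv ℝ (G.m g) G.one
def B (x : E) : E →L[ℝ] E := fderiv ℝ (G.m (G.inv x)) x

theorem smooth_left (g : E) : ContDiff ℝ (⊤ : ℕ∞) (G.m g) :=
  G.hm.comp (contDiff_const.prodMk contDiff_id)

theorem diff_left (g x : E) : DifferentiableAt ℝ (G.m g) x :=
  ((G.smooth_left g).differentiable (by simp)).differentiableAt

theorem smoothA : ContDiff ℝ (⊤ : ℕ∞) G.A :=
  ContDiff.fderiv (f := G.m) (g := fun _ => G.one) G.hm contDiff_const (by simp)

theorem smoothD (h : E) : ContDiff ℝ (⊤ : ℕ∞) (fun x => fderiv ℝ (G.m h) x) :=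
  ContDiff.fderiv (f := fun _ z => G.m h z) (g := id)
    ((G.smooth_left h).comp contDiff_snd) contDiff_id (by simp)

theorem smoothB : ContDiff ℝ (⊤ : ℕ∞) G.B :=
  ContDiff.fderiv (f := fun x z => G.m (G.inv x) z) (g := id)
    (G.hm.comp ((G.hinv.comp contDiff_fst).prodMk contDiff_snd)) contDiff_id (by simp)

theorem m_one_eq : G.m G.one = id := funext G.h1l

theorem A_one : G.A G.one = ContinuousLinearMap.id ℝ E := by
  show fderiv ℝ (G.m G.one) G.one = _
  rw [m_one_eq, fderiv_id]

theorem chain (p q x : E) :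
    fderiv ℝ (G.m (G.m p q)) x = (fderiv ℝ (G.m p) (G.m q x)).comp (fderiv ℝ (G.m q) x) := by
  have h : G.m (G.m p q) = (G.m p) ∘ (G.m q) := funext (G.hassoc p q)
  rw [h, fderiv_comp x (G.diff_left _ _) (G.diff_left _ _)]

theorem A_mul (g x : E) : G.A (G.m g x) = (fderiv ℝ (G.m g) x).comp (G.A x) := by
  have := G.chain g x G.one
  rw [G.h1r x] at this
  exact this

theorem inv_eq {a x : E} (h : G.m a x = G.one) : a = G.inv x := by
  have : G.m (G.m a x) (G.inv x) = G.m a (G.m x (G.inv x)) := G.hassoc a x (G.inv x)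
  rw [h, G.h1l, G.hinvr, G.h1r] at this
  exact this.symm

theorem inv_one : G.inv G.one = G.one := (G.inv_eq (G.h1l G.one)).symm

theorem inv_invx (x : E) : G.inv (G.inv x) = x := (G.inv_eq (G.hinvr x)).symm

theorem mul_invrev (p q : E) : G.inv (G.m p q) = G.m (G.inv q) (G.inv p) := by
  refine (G.inv_eq ?_).symm
  rw [G.hassoc, ← G.hassoc (G.inv p) p q, G.hinvl, G.h1l, G.hinvl]

theorem B_one : G.B G.one = ContinuousLinearMap.id ℝ E := by
  show fderiv ℝ (G.m (G.inv G.one)) G.one = _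
  rw [G.inv_one, ← G.A_one]
  rfl

theorem BA (x : E) : (G.B x).comp (G.A x) = ContinuousLinearMap.id ℝ E := by
  have := G.chain (G.inv x) x G.one
  rw [G.hinvl, G.h1r] at this
  show (fderiv ℝ (G.m (G.inv x)) x).comp (fderiv ℝ (G.m x) G.one) = _
  rw [← this, ← G.A_one]
  rfl

theorem AB (x : E) : (G.A x).comp (G.B x) = ContinuousLinearMap.id ℝ E := by
  have := G.chain x (G.inv x) x
  rw [G.hinvr, G.hinvl] at this
  show (fderiv ℝ (G.m x) G.one).comp (fderiv ℝ (G.m (G.inv x)) x) = _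
  rw [← this, m_one_eq, fderiv_id]

theorem B_A (x : E) (w : E) : G.B x (G.A x w) = w := by
  have := congrArg (fun (L : E →L[ℝ] E) => L w) (G.BA x); simpa using this

theorem A_B (x : E) (w : E) : G.A x (G.B x w) = w := by
  have := congrArg (fun (L : E →L[ℝ] E) => L w) (G.AB x); simpa using this

theorem A_ne {x w : E} (hw : w ≠ 0) : G.A x w ≠ 0 := fun h => hw (by
  have := G.B_A x w; rw [h] at this; simpa using this.symm)

theorem B_ne {x w : E} (hw : w ≠ 0) : G.B x w ≠ 0 := fun h => hw (by
  have := G.A_B x w; rw [h] at this; simpa using this.symm)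

/-- translation of ODE solutions -/
theorem translate (g : E) {k : ℝ → E} {w : E} {t : ℝ}
    (hk : HasDerivAt k (G.A (k t) w) t) :
    HasDerivAt (fun s => G.m g (k s)) (G.A (G.m g (k t)) w) t := by
  have h1 : HasDerivAt (fun s => G.m g (k s)) (fderiv ℝ (G.m g) (k t) (G.A (k t) w)) t :=
    (G.diff_left g (k t)).hasFDerivAt.comp_hasDerivAt t hk
  rwa [← ContinuousLinearMap.comp_apply, ← G.A_mul] at h1

theorem diffA : DifferentiableAt ℝ G.A G.one :=
  (G.smoothA.differentiable (by simp)).differentiableAt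

theorem fderiv_A_apply (v ξ : E) :
    fderiv ℝ (fun g => G.A g v) G.one ξ = fderiv ℝ G.A G.one ξ v := by
  rw [fderiv_clm_apply G.diffA (differentiableAt_const v)]
  simp

theorem Bprime_apply (ξ v : E) :
    fderiv ℝ G.B G.one ξ v = -(fderiv ℝ G.A G.one ξ v) := by
  have hBd : DifferentiableAt ℝ G.B G.one := (G.smoothB.differentiable (by simp)).differentiableAt
  have h1 := fderiv_clm_comp hBd G.diffA
  have h2 : (fun x => (G.B x).comp (G.A x)) = fun _ : E => ContinuousLinearMap.id ℝ E :=
    funext G.BA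
  rw [h2, fderiv_fun_const] at h1
  have h3 := congrArg (fun D : E →L[ℝ] E →L[ℝ] E => (D ξ) v) h1
  simp only [ContinuousLinearMap.zero_apply, ContinuousLinearMap.add_apply,
    ContinuousLinearMap.comp_apply, ContinuousLinearMap.flip_apply,
    ContinuousLinearMap.compL_apply, G.A_one, G.B_one, ContinuousLinearMap.coe_id', id_eq,
    ContinuousLinearMap.id_apply, Pi.zero_apply] at h3
  exact eq_neg_of_add_eq_zero_right h3.symm
end GD

section ODEs
open NNReal
variable {E : Type*} [NormedAddCommGroup E] [NormedSpace ℝ E] [FiniteDimensional ℝ E] (G : GD E)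

theorem GD.lipschitzOn_A {s : Set E} (hs : IsCompact s) (hconv : Convex ℝ s) :
    ∃ K : ℝ≥0, LipschitzOnWith K G.A s := by
  have hcont : Continuous (fderiv ℝ G.A) :=
    (G.smoothA.fderiv_right (m := 0) (by simp)).continuous
  obtain ⟨C, hC⟩ := hs.exists_bound_of_continuousOn (f := fderiv ℝ G.A) hcont.continuousOn
  refine ⟨C.toNNReal, Convex.lipschitzOnWith_of_nnnorm_fderiv_le
    (fun x _ => (G.smoothA.differentiable (by simp)).differentiableAt) (fun x hx => ?_) hconv⟩
  have h1 : ‖fderiv ℝ G.A x‖₊ = ‖fderiv ℝ G.A x‖.toNNReal := by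
    exact (norm_toNNReal (a := fderiv ℝ G.A x)).symm
  rw [h1]
  exact Real.toNNReal_mono (hC x hx)

theorem GD.lipschitz_v {s : Set E} {LA : ℝ≥0} (hLA : LipschitzOnWith LA G.A s)
    {y : E} {Cy : ℝ} (hy : ‖y‖ ≤ Cy) (hCy : 0 ≤ Cy) :
    LipschitzOnWith (LA * Cy.toNNReal) (fun x => G.A x y) s := by
  refine LipschitzOnWith.of_dist_le_mul (fun x hx z hz => ?_)
  have h1 : dist (G.A x y) (G.A z y) = ‖(G.A x - G.A z) y‖ := by
    rw [dist_eq_norm]; simp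
  have h2 : ‖(G.A x - G.A z) y‖ ≤ ‖G.A x - G.A z‖ * ‖y‖ :=
    (G.A x - G.A z).le_opNorm _
  have h3 : ‖G.A x - G.A z‖ ≤ LA * dist x z := by
    have := hLA.dist_le_mul x hx z hz
    rwa [dist_eq_norm] at this
  have h4 : ((LA * Cy.toNNReal : ℝ≥0) : ℝ) = (LA : ℝ) * Cy := by
    push_cast [Real.coe_toNNReal _ hCy]; ring
  rw [h1, h4]
  calc ‖(G.A x - G.A z) y‖ ≤ ‖G.A x - G.A z‖ * ‖y‖ := h2
    _ ≤ (LA * dist x z) * Cy := by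
        apply mul_le_mul h3 hy (norm_nonneg _)
        positivity
    _ = (LA : ℝ) * Cy * dist x z := by ring

theorem GD.uniq_core (w : ℝ → E) {α β : ℝ} (hαβ : α ≤ β)
    (hw : ContinuousOn w (Icc α β)) {f g : ℝ → E}
    (hf : ∀ t ∈ Icc α β, HasDerivAt f (G.A (f t) (w t)) t)
    (hg : ∀ t ∈ Icc α β, HasDerivAt g (G.A (g t) (w t)) t) :
    (f α = g α → EqOn f g (Icc α β)) ∧ (f β = g β → EqOn f g (Icc α β)) := by
  have hfc : ContinuousOn f (Icc α β) := fun t ht => (hf t ht).continuousAt.continuousWithinAt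
  have hgc : ContinuousOn g (Icc α β) := fun t ht => (hg t ht).continuousAt.continuousWithinAt
  obtain ⟨Cf, hCf⟩ := isCompact_Icc.exists_bound_of_continuousOn hfc
  obtain ⟨Cg, hCg⟩ := isCompact_Icc.exists_bound_of_continuousOn hgc
  set R := max Cf Cg with hR
  set S₀ : Set E := Metric.closedBall (0 : E) R with hS₀
  have hfS : ∀ t ∈ Icc α β, f t ∈ S₀ := fun t ht =>
    mem_closedBall_zero_iff.mpr ((hCf t ht).trans (le_max_left _ _))
  have hgS : ∀ t ∈ Icc α β, g t ∈ S₀ := fun t ht =>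
    mem_closedBall_zero_iff.mpr ((hCg t ht).trans (le_max_right _ _))
  obtain ⟨LA, hLA⟩ := G.lipschitzOn_A (isCompact_closedBall _ _) (convex_closedBall _ _)
  obtain ⟨Cw, hCw⟩ := isCompact_Icc.exists_bound_of_continuousOn hw
  have hCw0 : 0 ≤ Cw := le_trans (norm_nonneg (w α)) (hCw α ⟨le_rfl, hαβ⟩)
  set wcl : ℝ → E := fun t => w (max α (min t β)) with hwcl
  have hmem : ∀ t : ℝ, max α (min t β) ∈ Icc α β := fun t =>
    ⟨le_max_left _ _, max_le hαβ (min_le_right _ _)⟩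
  have hwclb : ∀ t : ℝ, ‖wcl t‖ ≤ Cw := fun t => hCw _ (hmem t)
  set v : ℝ → E → E := fun t x => G.A x (wcl t) with hv
  set K : ℝ≥0 := LA * Cw.toNNReal with hK
  have hlip : ∀ t, LipschitzOnWith K (v t) S₀ := fun t =>
    G.lipschitz_v hLA (hwclb t) hCw0
  have hveq : ∀ t ∈ Icc α β, ∀ x : E, v t x = G.A x (w t) := by
    intro t ht x
    simp only [hv, hwcl, min_eq_left ht.2, max_eq_right ht.1]
  constructor
  · intro hinit
    refine ODE_solution_unique_of_mem_Icc_right (v := v) (s := fun _ => S₀) (fun t _ => hlip t) hfc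
      (fun t ht => ?_) (fun t ht => hfS t (Ico_subset_Icc_self ht)) hgc (fun t ht => ?_)
      (fun t ht => hgS t (Ico_subset_Icc_self ht)) hinit
    · rw [hveq t (Ico_subset_Icc_self ht)]
      exact (hf t (Ico_subset_Icc_self ht)).hasDerivWithinAt
    · rw [hveq t (Ico_subset_Icc_self ht)]
      exact (hg t (Ico_subset_Icc_self ht)).hasDerivWithinAt
  · intro hinit
    refine ODE_solution_unique_of_mem_Icc_left (v := v) (s := fun _ => S₀) (fun t _ => hlip t) hfc
      (fun t ht => ?_) (fun t ht => hfS t (Ioc_subset_Icc_self ht)) hgc (fun t ht => ?_)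
      (fun t ht => hgS t (Ioc_subset_Icc_self ht)) hinit
    · rw [hveq t (Ioc_subset_Icc_self ht)]
      exact (hf t (Ioc_subset_Icc_self ht)).hasDerivWithinAt
    · rw [hveq t (Ioc_subset_Icc_self ht)]
      exact (hg t (Ioc_subset_Icc_self ht)).hasDerivWithinAt

theorem GD.local_exists (w : ℝ → E) {α β τ : ℝ} (hτ : τ ∈ Ioo α β)
    (hw : ContinuousOn w (Ioo α β)) :
    ∃ ε > (0:ℝ), ∀ s ∈ Icc (τ - ε) (τ + ε), ∃ k : ℝ → E, k s = G.one ∧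
      ∀ t ∈ Ioo (s - ε) (s + ε), HasDerivAt k (G.A (k t) (w t)) t := by
  haveI : CompleteSpace E := FiniteDimensional.complete ℝ E
  set δ : ℝ := min (τ - α) (β - τ) / 3 with hδdef
  have hδ : 0 < δ := by
    have h1 : 0 < τ - α := by linarith [hτ.1]
    have h2 : 0 < β - τ := by linarith [hτ.2]
    have := lt_min h1 h2
    positivity
  set J : Set ℝ := Icc (τ - 2*δ) (τ + 2*δ) with hJdef
  have hJsub : J ⊆ Ioo α β := by
    intro x hx
    have h1 : δ ≤ (τ - α)/3 := by
      rw [hδdef]; gcongr; exact min_le_left _ _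
    have h2 : δ ≤ (β - τ)/3 := by
      rw [hδdef]; gcongr; exact min_le_right _ _
    constructor
    · linarith [hx.1, hτ.1]
    · linarith [hx.2, hτ.2]
  have hwJ : ContinuousOn w J := hw.mono hJsub
  obtain ⟨Cy, hCy⟩ := isCompact_Icc.exists_bound_of_continuousOn hwJ
  have hτJ : τ ∈ J := ⟨by linarith, by linarith⟩
  have hCy0 : 0 ≤ Cy := (norm_nonneg _).trans (hCy τ hτJ)
  obtain ⟨LA, hLA⟩ := G.lipschitzOn_A (isCompact_closedBall G.one 1) (convex_closedBall _ _)
  obtain ⟨MA, hMA⟩ := (isCompact_closedBall G.one 1).exists_bound_of_continuousOn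
    G.smoothA.continuous.continuousOn
  have hMA0 : 0 ≤ MA := (norm_nonneg _).trans (hMA G.one (Metric.mem_closedBall_self zero_le_one))
  set C : ℝ := MA * Cy + 1 with hCdef
  have hC : 0 < C := by positivity
  set ε : ℝ := min δ (1/C) with hεdef
  have hε : 0 < ε := lt_min hδ (by positivity)
  have hεδ : ε ≤ δ := min_le_left _ _
  refine ⟨ε, hε, fun s hs => ?_⟩
  have hJ' : Icc (s - ε) (s + ε) ⊆ J := by
    intro x hx
    constructor
    · linarith [hx.1, hs.1]
    · linarith [hx.2, hs.2]
  have PL : IsPicardLindelof (fun t x => G.A x (w t)) (tmin := s - ε) (tmax := s + ε)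
      ⟨s, ⟨by linarith, by linarith⟩⟩ G.one 1 0 C.toNNReal (LA * Cy.toNNReal) := by
    refine ⟨?_, ?_, ?_, ?_⟩
    · exact fun t ht => G.lipschitz_v (by simpa using hLA) (hCy _ (hJ' ht)) hCy0
    · exact fun x hx => (G.A x).continuous.comp_continuousOn (hwJ.mono hJ')
    · intro t ht x hx
      rw [Real.coe_toNNReal _ hC.le]
      calc ‖G.A x (w t)‖ ≤ ‖G.A x‖ * ‖w t‖ := (G.A x).le_opNorm _
        _ ≤ MA * Cy := mul_le_mul (hMA x (by simpa using hx)) (hCy _ (hJ' ht)) (norm_nonneg _) hMA0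
        _ ≤ C := by rw [hCdef]; linarith
    · show (C.toNNReal : ℝ) * max (s + ε - s) (s - (s - ε)) ≤ ((1:ℝ≥0):ℝ) - ((0:ℝ≥0):ℝ)
      rw [Real.coe_toNNReal _ hC.le, NNReal.coe_one, NNReal.coe_zero, sub_zero]
      have : max (s + ε - s) (s - (s - ε)) = ε := by
        rw [add_sub_cancel_left, sub_sub_cancel, max_self]
      rw [this]
      have hε2 : ε ≤ 1/C := min_le_right _ _
      calc C * ε ≤ C * (1/C) := by
            apply mul_le_mul_of_nonneg_left hε2 (le_of_lt hC)
        _ = 1 := by field_simp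
  obtain ⟨k, hk0, hk⟩ := PL.exists_eq_forall_mem_Icc_hasDerivWithinAt₀
  refine ⟨k, hk0, fun t ht => ?_⟩
  exact (hk t (Ioo_subset_Icc_self ht)).hasDerivAt (Icc_mem_nhds ht.1 ht.2)

theorem GD.exists_right (w : ℝ → E) {α β : ℝ} (h0 : (0:ℝ) ∈ Ioo α β)
    (hw : ContinuousOn w (Ioo α β)) {T : ℝ} (hT : T ∈ Ico 0 β) :
    ∃ k : ℝ → E, k 0 = G.one ∧ ∀ t ∈ Icc 0 T, HasDerivAt k (G.A (k t) (w t)) t := by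
  set M := {t : ℝ | t ∈ Icc 0 T ∧ ∃ k : ℝ → E, k 0 = G.one ∧
    ∀ s ∈ Icc 0 t, HasDerivAt k (G.A (k s) (w s)) s} with hM
  have h0M : 0 ∈ M := by
    obtain ⟨ε, hε, hloc⟩ := G.local_exists w h0 hw
    obtain ⟨k, hk0, hk⟩ := hloc 0 (by constructor <;> linarith)
    refine ⟨⟨le_rfl, hT.1⟩, k, hk0, fun s hs => ?_⟩
    have hs0 : s = 0 := le_antisymm hs.2 hs.1
    subst hs0
    exact hk 0 ⟨by linarith, by linarith⟩
  have hMne : M.Nonempty := ⟨0, h0M⟩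
  have hMbdd : BddAbove M := ⟨T, fun t ht => ht.1.2⟩
  set τ := sSup M with hτdef
  have hτmem : τ ∈ Icc 0 T := ⟨le_csSup hMbdd h0M, csSup_le hMne (fun t ht => ht.1.2)⟩
  have hτIoo : τ ∈ Ioo α β :=
    ⟨lt_of_lt_of_le h0.1 hτmem.1, lt_of_le_of_lt hτmem.2 hT.2⟩
  obtain ⟨ε, hε, hloc⟩ := G.local_exists w hτIoo hw
  obtain ⟨t₁, ht₁M, ht₁⟩ : ∃ t₁ ∈ M, τ - ε/2 < t₁ :=
    exists_lt_of_lt_csSup hMne (by linarith)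
  have ht₁le : t₁ ≤ τ := le_csSup hMbdd ht₁M
  obtain ⟨⟨ht₁0, ht₁T⟩, k₁, hk₁0, hk₁⟩ := ht₁M
  obtain ⟨d, hd0, hd⟩ := hloc t₁ ⟨by linarith, by linarith⟩
  set e : ℝ → E := fun t => G.m (k₁ t₁) (d t) with he
  have hed : ∀ t ∈ Ioo (t₁ - ε) (t₁ + ε), HasDerivAt e (G.A (e t) (w t)) t :=
    fun t ht => G.translate _ (hd t ht)
  have het₁ : e t₁ = k₁ t₁ := by rw [he]; simp only; rw [hd0, G.h1r]
  set lo : ℝ := max (t₁ - ε/2) 0 with hlo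
  have hlo0 : 0 ≤ lo := le_max_right _ _
  have hlot₁ : lo ≤ t₁ := max_le (by linarith) ht₁0
  have hEq : EqOn k₁ e (Icc lo t₁) := by
    have hsub : Icc lo t₁ ⊆ Ioo α β := fun x hx =>
      ⟨lt_of_lt_of_le h0.1 (le_trans hlo0 hx.1),
       lt_of_le_of_lt (le_trans hx.2 ht₁T) hT.2⟩
    refine (G.uniq_core w hlot₁ (hw.mono hsub) (fun s hs => hk₁ s ⟨le_trans hlo0 hs.1, hs.2⟩)
      (fun s hs => hed s ⟨by have := le_trans (le_max_left _ _ : t₁ - ε/2 ≤ lo) hs.1; linarith,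
        by linarith [hs.2]⟩)).2 het₁.symm
  set τ'' : ℝ := min (t₁ + ε/2) T with hτ''def
  have hτ''0 : 0 ≤ τ'' := le_min (by linarith) hT.1
  have hτ''M : τ'' ∈ M := by
    refine ⟨⟨hτ''0, min_le_right _ _⟩, ?_⟩
    by_cases hcase : t₁ < ε/2
    · have h0mem : (0:ℝ) ∈ Icc lo t₁ := ⟨max_le (by linarith) le_rfl, ht₁0⟩
      have he0 : e 0 = G.one := by rw [← hEq h0mem, hk₁0]
      refine ⟨e, he0, fun s hs => hed s ⟨by linarith [hs.1], ?_⟩⟩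
      have := hs.2
      have h1 : τ'' ≤ t₁ + ε/2 := min_le_left _ _
      linarith
    · push_neg at hcase
      have ht₁pos : 0 < t₁ := lt_of_lt_of_le (by linarith) hcase
      set k₂ : ℝ → E := fun t => if t ≤ t₁ then k₁ t else e t with hk₂
      have hk₂0 : k₂ 0 = G.one := by
        rw [hk₂]; simp only; rw [if_pos ht₁0, hk₁0]
      refine ⟨k₂, hk₂0, fun s hs => ?_⟩
      rcases lt_or_ge s t₁ with hst | hst
      · have hev : k₂ =ᶠ[nhds s] k₁ := by
          filter_upwards [Iio_mem_nhds hst] with t ht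
          rw [hk₂]; simp only; rw [if_pos (le_of_lt ht)]
        have hks : k₂ s = k₁ s := by
          rw [hk₂]; simp only; rw [if_pos (le_of_lt hst)]
        have := (hk₁ s ⟨hs.1, le_of_lt hst⟩).congr_of_eventuallyEq hev
        rw [hks]; exact this
      · have hlolt : lo < t₁ := lt_of_lt_of_le (by
          apply max_lt <;> linarith) le_rfl
        have hsup : s < t₁ + ε := by
          have h1 : τ'' ≤ t₁ + ε/2 := min_le_left _ _
          linarith [hs.2]
        have hev : k₂ =ᶠ[nhds s] e := by
          filter_upwards [Ioo_mem_nhds (lt_of_lt_of_le hlolt hst) hsup] with t ht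
          rw [hk₂]; simp only
          by_cases h' : t ≤ t₁
          · rw [if_pos h']; exact hEq ⟨le_of_lt ht.1, h'⟩
          · rw [if_neg h']
        have hsIoo : s ∈ Ioo (t₁ - ε) (t₁ + ε) := ⟨by linarith, hsup⟩
        have hks : k₂ s = e s := hev.eq_of_nhds
        have := (hed s hsIoo).congr_of_eventuallyEq hev
        rw [hks]; exact this
  have hle : τ'' ≤ τ := le_csSup hMbdd hτ''M
  have hTτ : T ≤ t₁ + ε/2 := by
    by_contra h'
    push_neg at h'
    have h1 : τ'' = t₁ + ε/2 := min_eq_left (le_of_lt h')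
    rw [h1] at hle
    linarith
  have hfin : τ'' = T := min_eq_right hTτ
  obtain ⟨_, k, hk0, hk⟩ := hτ''M
  exact ⟨k, hk0, by rwa [hfin] at hk⟩

theorem GD.exists_left (w : ℝ → E) {α β : ℝ} (h0 : (0:ℝ) ∈ Ioo α β)
    (hw : ContinuousOn w (Ioo α β)) {T : ℝ} (hT : T ∈ Ioc α 0) :
    ∃ k : ℝ → E, k 0 = G.one ∧ ∀ t ∈ Icc T 0, HasDerivAt k (G.A (k t) (w t)) t := by
  set w' : ℝ → E := fun t => -(w (-t)) with hw'def
  have h0' : (0:ℝ) ∈ Ioo (-β) (-α) := by constructor <;> [linarith [h0.2]; linarith [h0.1]]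
  have hmaps : MapsTo (fun t : ℝ => -t) (Ioo (-β) (-α)) (Ioo α β) := fun t ht =>
    ⟨show α < -t by linarith [ht.2], show -t < β by linarith [ht.1]⟩
  have hw' : ContinuousOn w' (Ioo (-β) (-α)) :=
    ((hw.comp continuousOn_neg hmaps).neg)
  have hT' : -T ∈ Ico 0 (-α) := ⟨by linarith [hT.2], by linarith [hT.1]⟩
  obtain ⟨k', hk'0, hk'⟩ := G.exists_right w' h0' hw' hT'
  refine ⟨fun t => k' (-t), by simpa using hk'0, fun t ht => ?_⟩
  have h1 : HasDerivAt (fun t => k' (-t)) ((-1 : ℝ) • (G.A (k' (-t)) (w' (-t)))) t := by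
    have h2 := hk' (-t) ⟨by linarith [ht.2], by linarith [ht.1]⟩
    exact h2.scomp t (hasDerivAt_neg t)
  have h3 : (-1 : ℝ) • (G.A (k' (-t)) (w' (-t))) = G.A (k' (-t)) (w t) := by
    rw [hw'def]; simp only [neg_neg]
    rw [map_neg]; simp
  rwa [h3] at h1

theorem GD.exists_sol (w : ℝ → E) {α β : ℝ} (h0 : (0:ℝ) ∈ Ioo α β)
    (hw : ContinuousOn w (Ioo α β)) :
    ∃ c : ℝ → E, c 0 = G.one ∧ ∀ t ∈ Ioo α β, HasDerivAt c (G.A (c t) (w t)) t := by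
  classical
  have hβpos : 0 < β := h0.2
  have hαneg : α < 0 := h0.1
  choose kR hkR0 hkR using fun (T : ℝ) (hT : T ∈ Ico 0 β) => G.exists_right w h0 hw hT
  choose kL hkL0 hkL using fun (T : ℝ) (hT : T ∈ Ioc α 0) => G.exists_left w h0 hw hT
  have hcoh_R : ∀ T₁ (h₁ : T₁ ∈ Ico 0 β) T₂ (h₂ : T₂ ∈ Ico 0 β), T₁ ≤ T₂ →
      ∀ t ∈ Icc 0 T₁, kR T₁ h₁ t = kR T₂ h₂ t := by
    intro T₁ h₁ T₂ h₂ hle t ht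
    have hsub : Icc (0:ℝ) T₁ ⊆ Ioo α β := fun x hx =>
      ⟨lt_of_lt_of_le hαneg hx.1, lt_of_le_of_lt hx.2 h₁.2⟩
    exact (G.uniq_core w h₁.1 (hw.mono hsub) (fun s hs => hkR T₁ h₁ s hs)
      (fun s hs => hkR T₂ h₂ s ⟨hs.1, le_trans hs.2 hle⟩)).1
      (by rw [hkR0, hkR0]) ht
  have hcoh_L : ∀ T₁ (h₁ : T₁ ∈ Ioc α 0) T₂ (h₂ : T₂ ∈ Ioc α 0), T₂ ≤ T₁ →
      ∀ t ∈ Icc T₁ 0, kL T₁ h₁ t = kL T₂ h₂ t := by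
    intro T₁ h₁ T₂ h₂ hle t ht
    have hsub : Icc T₁ (0:ℝ) ⊆ Ioo α β := fun x hx =>
      ⟨lt_of_lt_of_le h₁.1 hx.1, lt_of_le_of_lt hx.2 hβpos⟩
    exact (G.uniq_core w h₁.2 (hw.mono hsub) (fun s hs => hkL T₁ h₁ s hs)
      (fun s hs => hkL T₂ h₂ s ⟨le_trans hle hs.1, hs.2⟩)).2
      (by rw [hkL0, hkL0]) ht
  set c : ℝ → E := fun t => if h : t ∈ Ico 0 β then kR t h t
    else (if h' : t ∈ Ioc α 0 then kL t h' t else G.one) with hc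
  have hc0 : c 0 = G.one := by
    rw [hc]; simp only
    rw [dif_pos (show (0:ℝ) ∈ Ico 0 β from ⟨le_rfl, hβpos⟩)]
    exact hkR0 _ _
  have hcR : ∀ T (hT : T ∈ Ico 0 β), ∀ t ∈ Icc 0 T, c t = kR T hT t := by
    intro T hT t ht
    have htm : t ∈ Ico 0 β := ⟨ht.1, lt_of_le_of_lt ht.2 hT.2⟩
    rw [hc]; simp only; rw [dif_pos htm]
    exact hcoh_R t htm T hT ht.2 t ⟨ht.1, le_rfl⟩
  have hcL : ∀ T (hT : T ∈ Ioc α 0), ∀ t ∈ Icc T 0, c t = kL T hT t := by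
    intro T hT t ht
    by_cases ht0 : t ∈ Ico 0 β
    · have hteq : t = 0 := le_antisymm ht.2 ht0.1
      subst hteq
      rw [hc]; simp only; rw [dif_pos ht0, hkR0, hkL0]
    · have htle : t ≤ 0 := by
        by_contra hcon
        push_neg at hcon
        exact ht0 ⟨le_of_lt hcon, lt_of_le_of_lt ht.2 hβpos⟩
      have htm : t ∈ Ioc α 0 := ⟨lt_of_lt_of_le hT.1 ht.1, htle⟩
      rw [hc]; simp only; rw [dif_neg ht0, dif_pos htm]
      exact hcoh_L t htm T hT ht.1 t ⟨le_rfl, htle⟩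
  refine ⟨c, hc0, fun t ht => ?_⟩
  rcases lt_trichotomy t 0 with htn | rfl | htp
  · set T : ℝ := (α + t)/2 with hTdef
    have hT : T ∈ Ioc α 0 := ⟨by linarith [ht.1], by linarith⟩
    have htmem : t ∈ Icc T 0 := ⟨by linarith [ht.1], le_of_lt htn⟩
    have hev : c =ᶠ[nhds t] kL T hT := by
      filter_upwards [Ioo_mem_nhds (show T < t by linarith [ht.1]) htn] with s hs
      exact hcL T hT s ⟨le_of_lt hs.1, le_of_lt hs.2⟩
    have h1 := (hkL T hT t htmem).congr_of_eventuallyEq hev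
    rwa [← hcL T hT t htmem] at h1
  · have hTR : β/2 ∈ Ico (0:ℝ) β := ⟨by linarith, by linarith⟩
    have hTL : α/2 ∈ Ioc α (0:ℝ) := ⟨by linarith, by linarith⟩
    have h0R : (0:ℝ) ∈ Icc 0 (β/2) := ⟨le_rfl, by linarith⟩
    have h0L : (0:ℝ) ∈ Icc (α/2) 0 := ⟨by linarith, le_rfl⟩
    have hfr : HasDerivWithinAt c (G.A (c 0) (w 0)) (Icc 0 (β/2)) 0 := by
      have h1 := (hkR _ hTR 0 h0R).hasDerivWithinAt (s := Icc 0 (β/2))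
      have h2 := h1.congr (fun s hs => hcR _ hTR s hs) (hcR _ hTR 0 h0R)
      rwa [← hcR _ hTR 0 h0R] at h2
    have hfl : HasDerivWithinAt c (G.A (c 0) (w 0)) (Icc (α/2) 0) 0 := by
      have h1 := (hkL _ hTL 0 h0L).hasDerivWithinAt (s := Icc (α/2) 0)
      have h2 := h1.congr (fun s hs => hcL _ hTL s hs) (hcL _ hTL 0 h0L)
      rwa [← hcL _ hTL 0 h0L] at h2
    have hu := hfl.union hfr
    have hun : Icc (α/2) (0:ℝ) ∪ Icc 0 (β/2) = Icc (α/2) (β/2) :=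
      Icc_union_Icc_eq_Icc (by linarith) (by linarith)
    rw [hun] at hu
    exact hu.hasDerivAt (Icc_mem_nhds (by linarith) (by linarith))
  · set T : ℝ := (t + β)/2 with hTdef
    have hT : T ∈ Ico 0 β := ⟨by linarith, by linarith [ht.2]⟩
    have htmem : t ∈ Icc 0 T := ⟨le_of_lt htp, by linarith [ht.2]⟩
    have hev : c =ᶠ[nhds t] kR T hT := by
      filter_upwards [Ioo_mem_nhds htp (show t < T by linarith [ht.2])] with s hs
      exact hcR T hT s ⟨le_of_lt hs.1, le_of_lt hs.2⟩
    have h1 := (hkR T hT t htmem).congr_of_eventuallyEq hev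
    rwa [← hcR T hT t htmem] at h1

end ODEs

/-- for a left invariant spray `G = G₀ - H` on the Lie group `G`
(standard-coordinate form `G(x,y) = (y, -2 Gc(x,y))`, with spray vector field
`η(y) = (G₀)₂(e,y) + 2 Gc(e,y)`), and any open interval `(a,b) ∋ 0`, the map
`c ↦ y`, `y(t) = (L_{c(t)⁻¹})_* ċ(t)`, is a one-to-one correspondence between
geodesics `c : (a,b) → G` of `G` with `c 0 = e` and integral curves
`y : (a,b) → g \ {0}` of `-η`: every geodesic maps to an integral curve, and every
integral curve arises from a geodesic that is unique on `(a,b)`. -/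
theorem statement13
    {E : Type*} [NormedAddCommGroup E] [NormedSpace ℝ E] [FiniteDimensional ℝ E]
    {n : ℕ}
    (m : E → E → E) (one : E) (inv : E → E)
    (hm : ContDiff ℝ (⊤ : ℕ∞) (fun p : E × E => m p.1 p.2))
    (hinv : ContDiff ℝ (⊤ : ℕ∞) inv)
    (h1l : ∀ x, m one x = x) (h1r : ∀ x, m x one = x)
    (hassoc : ∀ a bb cc, m (m a bb) cc = m a (m bb cc))
    (hinvl : ∀ x, m (inv x) x = one) (hinvr : ∀ x, m x (inv x) = one)
    (b : Module.Basis (Fin n) ℝ E)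
    (u : E × E → Fin n → ℝ)
    (hu : ∀ p : E × E, ∑ i, u p i • leftInvExt m one (b i) p.1 = p.2)
    (Gc : E → E → E)
    (hGchom : ∀ (x y : E) (t : ℝ), 0 < t → Gc x (t • y) = (t ^ 2) • Gc x y)
    (hGcsmooth : ∀ p : E × E, p.2 ≠ 0 → ContDiffAt ℝ (⊤ : ℕ∞) (fun q : E × E => Gc q.1 q.2) p)
    (hleftinv : ∀ (h : E) (p : E × E), p.2 ≠ 0 →
      fderiv ℝ (fun q : E × E => ((m h q.1, fderiv ℝ (m h) q.1 q.2) : E × E)) p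
          ((p.2, -(2 : ℝ) • Gc p.1 p.2) : E × E)
        = ((fderiv ℝ (m h) p.1 p.2,
            -(2 : ℝ) • Gc (m h p.1) (fderiv ℝ (m h) p.1 p.2)) : E × E))
    (η : E → E)
    (hη : ∀ y : E, y ≠ 0 →
      η y = (∑ i, u (one, y) i • completeLift (leftInvExt m one (b i)) ((one, y) : E × E)).2
        + (2 : ℝ) • Gc one y)
    (a bb : ℝ) (hab : (0 : ℝ) ∈ Set.Ioo a bb) :
    (∀ c : ℝ → E, c 0 = one →
      (∀ t ∈ Set.Ioo a bb, deriv c t ≠ 0 ∧ HasDerivAt c (deriv c t) t ∧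
        HasDerivAt (deriv c) (-(2 : ℝ) • Gc (c t) (deriv c t)) t) →
      (∀ t ∈ Set.Ioo a bb,
        fderiv ℝ (m (inv (c t))) (c t) (deriv c t) ≠ 0 ∧
        HasDerivAt (fun s => fderiv ℝ (m (inv (c s))) (c s) (deriv c s))
          (-η (fderiv ℝ (m (inv (c t))) (c t) (deriv c t))) t)) ∧
    (∀ yc : ℝ → E,
      (∀ t ∈ Set.Ioo a bb, yc t ≠ 0 ∧ HasDerivAt yc (-η (yc t)) t) →
      ∃ c : ℝ → E, c 0 = one ∧
        (∀ t ∈ Set.Ioo a bb, deriv c t ≠ 0 ∧ HasDerivAt c (deriv c t) t ∧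
          HasDerivAt (deriv c) (-(2 : ℝ) • Gc (c t) (deriv c t)) t) ∧
        (∀ t ∈ Set.Ioo a bb, fderiv ℝ (m (inv (c t))) (c t) (deriv c t) = yc t) ∧
        ∀ c' : ℝ → E, c' 0 = one →
          (∀ t ∈ Set.Ioo a bb, deriv c' t ≠ 0 ∧ HasDerivAt c' (deriv c' t) t ∧
            HasDerivAt (deriv c') (-(2 : ℝ) • Gc (c' t) (deriv c' t)) t) →
          (∀ t ∈ Set.Ioo a bb, fderiv ℝ (m (inv (c' t))) (c' t) (deriv c' t) = yc t) →
          Set.EqOn c c' (Set.Ioo a bb)) := by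
  classical
  haveI : CompleteSpace E := FiniteDimensional.complete ℝ E
  let G : GD E := ⟨m, one, inv, hm, hinv, h1l, h1r, hassoc, hinvl, hinvr⟩
  -- basis expansion of a tangent vector
  have hbasis : ∀ y : E, (∑ i, u (one, y) i • b i) = y := by
    intro y
    have h1 := hu (one, y)
    have h2 : ∀ v : E, leftInvExt m one v one = v := by
      intro v
      show fderiv ℝ (m one) one v = v
      rw [show m one = id from funext h1l, fderiv_id]
      rfl
    simp only [h2] at h1
    exact h1
  -- the key identity for η
  have etaEq : ∀ y : E, y ≠ 0 →
      (fderiv ℝ G.A G.one y) y = η y - (2:ℝ) • Gc one y := by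
    intro y hy
    have hsum : (fun g => G.A g y) = fun g => ∑ i, u (one, y) i • (leftInvExt m one (b i) g) := by
      funext g
      have h1 : G.A g y = G.A g (∑ i, u (one, y) i • b i) := by rw [hbasis y]
      rw [h1, map_sum]
      refine Finset.sum_congr rfl fun i _ => ?_
      rw [map_smul]
      rfl
    have hdiff : ∀ i : Fin n, DifferentiableAt ℝ (leftInvExt m one (b i)) G.one := by
      intro i
      show DifferentiableAt ℝ (fun g => fderiv ℝ (m g) one (b i)) G.one
      exact DifferentiableAt.clm_apply (G := E)
        ((G.smoothA.differentiable (by simp)).differentiableAt) (differentiableAt_const _)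
    have h2 : fderiv ℝ (fun g => G.A g y) G.one
        = ∑ i, u (one, y) i • fderiv ℝ (leftInvExt m one (b i)) G.one := by
      rw [hsum, fderiv_fun_sum (A := fun i g => u (one, y) i • leftInvExt m one (b i) g) (fun i _ => ((hdiff i).const_smul _))]
      exact Finset.sum_congr rfl fun i _ => fderiv_const_smul (hdiff i) _
    have h3 := congrArg (fun L : E →L[ℝ] E => L y) h2
    simp only [ContinuousLinearMap.sum_apply, ContinuousLinearMap.smul_apply] at h3
    rw [G.fderiv_A_apply y y] at h3
    have h4 := hη y hy
    have h5 : (∑ i, u (one, y) i • completeLift (leftInvExt m one (b i)) ((one, y) : E × E)).2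
        = ∑ i, u (one, y) i • fderiv ℝ (leftInvExt m one (b i)) one y := by
      rw [Prod.snd_sum]
      exact Finset.sum_congr rfl fun i _ => rfl
    rw [h5] at h4
    rw [h3, h4]
    abel
  -- raw bridges
  have chainR : ∀ p q x : E, fderiv ℝ (m (m p q)) x
      = (fderiv ℝ (m p) (m q x)).comp (fderiv ℝ (m q) x) := G.chain
  have invrevR : ∀ p q : E, inv (m p q) = m (inv q) (inv p) := G.mul_invrev
  have diffleftR : ∀ g x : E, DifferentiableAt ℝ (m g) x := G.diff_left
  have smoothAR : ContDiff ℝ (⊤ : ℕ∞) (fun g : E => fderiv ℝ (m g) one) := G.smoothA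
  have AmulR : ∀ g x : E, fderiv ℝ (m (m g x)) one
      = (fderiv ℝ (m g) x).comp (fderiv ℝ (m x) one) := G.A_mul
  have smoothBR : ContDiff ℝ (⊤ : ℕ∞) (fun x : E => fderiv ℝ (m (inv x)) x) := G.smoothB
  have smoothDR : ∀ h : E, ContDiff ℝ (⊤ : ℕ∞) (fun x : E => fderiv ℝ (m h) x) := G.smoothD
  have B_oneR : fderiv ℝ (m (inv one)) one = ContinuousLinearMap.id ℝ E := G.B_one
  have BprimeR : ∀ ξ v : E, fderiv ℝ (fun x : E => fderiv ℝ (m (inv x)) x) one ξ v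
      = -(fderiv ℝ (fun g : E => fderiv ℝ (m g) one) one ξ v) := G.Bprime_apply
  have etaEqR : ∀ y : E, y ≠ 0 →
      fderiv ℝ (fun g : E => fderiv ℝ (m g) one) one y y = η y - (2:ℝ) • Gc one y := etaEq
  constructor
  · -- geodesics map to integral curves
    intro c hc0 hgeo t₀ ht₀
    obtain ⟨hne, hc', hc''⟩ := hgeo t₀ ht₀
    set h : E := inv (c t₀) with hh
    have hinvlc : m h (c t₀) = one := by rw [hh]; exact hinvl (c t₀)
    have hy₀ne : fderiv ℝ (m h) (c t₀) (deriv c t₀) ≠ 0 := by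
      intro h0
      apply hne
      have h1 := chainR (inv h) h (c t₀)
      rw [hinvl h] at h1
      have h2 := congrArg (fun L : E →L[ℝ] E => L (deriv c t₀)) h1
      simp only [ContinuousLinearMap.comp_apply] at h2
      rw [h0] at h2
      rw [show m one = id from funext h1l, fderiv_id] at h2
      simpa using h2
    have hFdiff : DifferentiableAt ℝ
        (fun q : E × E => ((m h q.1, fderiv ℝ (m h) q.1 q.2) : E × E)) (c t₀, deriv c t₀) := by
      apply DifferentiableAt.prodMk
      · exact (diffleftR h _).comp _ differentiableAt_fst
      · exact DifferentiableAt.clm_apply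
          ((((smoothDR h).differentiable (by simp)) _).comp _ differentiableAt_fst)
          differentiableAt_snd
    have hz : HasDerivAt (fun s => ((c s, deriv c s) : E × E))
        ((deriv c t₀, -(2:ℝ) • Gc (c t₀) (deriv c t₀)) : E × E) t₀ := hc'.prodMk hc''
    have htr := hFdiff.hasFDerivAt.comp_hasDerivAt t₀ hz
    have hli : fderiv ℝ (fun q : E × E => ((m h q.1, fderiv ℝ (m h) q.1 q.2) : E × E))
        (c t₀, deriv c t₀) ((deriv c t₀, -(2:ℝ) • Gc (c t₀) (deriv c t₀)) : E × E)
        = ((fderiv ℝ (m h) (c t₀) (deriv c t₀),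
            -(2:ℝ) • Gc (m h (c t₀)) (fderiv ℝ (m h) (c t₀) (deriv c t₀))) : E × E) :=
      hleftinv h (c t₀, deriv c t₀) hne
    rw [hli, hinvlc] at htr
    have hK : HasDerivAt (fun s => fderiv ℝ (m h) (c s) (deriv c s))
        (-(2:ℝ) • Gc one (fderiv ℝ (m h) (c t₀) (deriv c t₀))) t₀ := by
      have h2 := (ContinuousLinearMap.snd ℝ E E).hasFDerivAt.comp_hasDerivAt t₀ htr
      simpa [Function.comp_def] using h2
    have hk' : HasDerivAt (fun s => m h (c s)) (fderiv ℝ (m h) (c t₀) (deriv c t₀)) t₀ := by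
      have h2 := (ContinuousLinearMap.fst ℝ E E).hasFDerivAt.comp_hasDerivAt t₀ htr
      simpa [Function.comp_def] using h2
    have hyeq : ∀ s : ℝ, fderiv ℝ (m (inv (c s))) (c s) (deriv c s)
        = fderiv ℝ (m (inv (m h (c s)))) (m h (c s)) (fderiv ℝ (m h) (c s) (deriv c s)) := by
      intro s
      have h1 : m (inv (m h (c s))) h = inv (c s) := by
        rw [invrevR h (c s), hassoc, hinvl h, h1r]
      have h2 := chainR (inv (m h (c s))) h (c s)
      rw [h1] at h2
      have h3 := congrArg (fun L : E →L[ℝ] E => L (deriv c s)) h2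
      simpa using h3
    have hBk : HasDerivAt (fun s => fderiv ℝ (m (inv (m h (c s)))) (m h (c s)))
        (fderiv ℝ (fun x : E => fderiv ℝ (m (inv x)) x) one
          (fderiv ℝ (m h) (c t₀) (deriv c t₀))) t₀ := by
      have hd : HasFDerivAt (fun x : E => fderiv ℝ (m (inv x)) x)
          (fderiv ℝ (fun x : E => fderiv ℝ (m (inv x)) x) (m h (c t₀))) (m h (c t₀)) :=
        ((smoothBR.differentiable (by simp)) _).hasFDerivAt
      rw [show fderiv ℝ (fun x : E => fderiv ℝ (m (inv x)) x) (m h (c t₀))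
        = fderiv ℝ (fun x : E => fderiv ℝ (m (inv x)) x) one from by rw [hinvlc]] at hd
      exact hd.comp_hasDerivAt t₀ hk'
    have hy' := hBk.clm_apply hK
    have hval : (fderiv ℝ (fun x : E => fderiv ℝ (m (inv x)) x) one
          (fderiv ℝ (m h) (c t₀) (deriv c t₀))) (fderiv ℝ (m h) (c t₀) (deriv c t₀))
        + (fderiv ℝ (m (inv (m h (c t₀)))) (m h (c t₀)))
            (-(2:ℝ) • Gc one (fderiv ℝ (m h) (c t₀) (deriv c t₀)))
        = -η (fderiv ℝ (m h) (c t₀) (deriv c t₀)) := by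
      rw [hinvlc, BprimeR, etaEqR _ hy₀ne, B_oneR]
      simp only [ContinuousLinearMap.id_apply, neg_smul]
      abel
    refine ⟨hy₀ne, ?_⟩
    have hfun : (fun s => fderiv ℝ (m (inv (c s))) (c s) (deriv c s))
        = (fun s => fderiv ℝ (m (inv (m h (c s)))) (m h (c s))
            (fderiv ℝ (m h) (c s) (deriv c s))) := funext hyeq
    rw [hfun, ← hval]
    exact hy'
  · intro yc hyc
    have hycne : ∀ t ∈ Set.Ioo a bb, yc t ≠ 0 := fun t ht => (hyc t ht).1
    have hycd : ∀ t ∈ Set.Ioo a bb, HasDerivAt yc (-η (yc t)) t := fun t ht => (hyc t ht).2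
    have hyccont : ContinuousOn yc (Set.Ioo a bb) :=
      fun t ht => (hycd t ht).continuousAt.continuousWithinAt
    obtain ⟨c, hc0, hcd0⟩ := G.exists_sol yc hab hyccont
    have hcd : ∀ t ∈ Set.Ioo a bb, HasDerivAt c (fderiv ℝ (m (c t)) one (yc t)) t := hcd0
    have hderiv : ∀ t ∈ Set.Ioo a bb, deriv c t = fderiv ℝ (m (c t)) one (yc t) :=
      fun t ht => (hcd t ht).deriv
    have A_neR : ∀ (x : E) {w : E}, w ≠ 0 → fderiv ℝ (m x) one w ≠ 0 := by
      intro x w hw; exact G.A_ne hw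
    have B_AR : ∀ x w : E, fderiv ℝ (m (inv x)) x (fderiv ℝ (m x) one w) = w := G.B_A
    have A_BR : ∀ x w : E, fderiv ℝ (m x) one (fderiv ℝ (m (inv x)) x w) = w := G.A_B
    have hmatch : ∀ t ∈ Set.Ioo a bb, fderiv ℝ (m (inv (c t))) (c t) (deriv c t) = yc t := by
      intro t ht
      rw [hderiv t ht]
      exact B_AR (c t) (yc t)
    have hgeo : ∀ t ∈ Set.Ioo a bb, deriv c t ≠ 0 ∧ HasDerivAt c (deriv c t) t ∧
        HasDerivAt (deriv c) (-(2:ℝ) • Gc (c t) (deriv c t)) t := by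
      intro t₀ ht₀
      have hd1 : HasDerivAt c (deriv c t₀) t₀ := by
        rw [hderiv t₀ ht₀]; exact hcd t₀ ht₀
      have hne : deriv c t₀ ≠ 0 := by
        rw [hderiv t₀ ht₀]; exact A_neR _ (hycne t₀ ht₀)
      refine ⟨hne, hd1, ?_⟩
      have hk1 : m (inv (c t₀)) (c t₀) = one := hinvl (c t₀)
      have hkd : ∀ s ∈ Set.Ioo a bb,
          HasDerivAt (fun s' => m (inv (c t₀)) (c s'))
            (fderiv ℝ (m (m (inv (c t₀)) (c s))) one (yc s)) s := by
        intro s hs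
        exact G.translate (inv (c t₀)) (hcd s hs)
      have hk' : HasDerivAt (fun s' => m (inv (c t₀)) (c s')) (yc t₀) t₀ := by
        have h2 := hkd t₀ ht₀
        rw [hk1, show m one = id from funext h1l, fderiv_id] at h2
        simpa using h2
      have hAk : HasDerivAt (fun s => fderiv ℝ (m (m (inv (c t₀)) (c s))) one)
          (fderiv ℝ (fun g : E => fderiv ℝ (m g) one) one (yc t₀)) t₀ := by
        have hd : HasFDerivAt (fun g : E => fderiv ℝ (m g) one)
            (fderiv ℝ (fun g : E => fderiv ℝ (m g) one) (m (inv (c t₀)) (c t₀)))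
            (m (inv (c t₀)) (c t₀)) := ((smoothAR.differentiable (by simp)) _).hasFDerivAt
        rw [show fderiv ℝ (fun g : E => fderiv ℝ (m g) one) (m (inv (c t₀)) (c t₀))
          = fderiv ℝ (fun g : E => fderiv ℝ (m g) one) one from by rw [hk1]] at hd
        exact hd.comp_hasDerivAt t₀ hk'
      have hK' := hAk.clm_apply (hycd t₀ ht₀)
      have hKval : (fderiv ℝ (fun g : E => fderiv ℝ (m g) one) one (yc t₀)) (yc t₀)
          + (fderiv ℝ (m (m (inv (c t₀)) (c t₀))) one) (-η (yc t₀))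
          = -(2:ℝ) • Gc one (yc t₀) := by
        rw [etaEqR _ (hycne t₀ ht₀), hk1, show m one = id from funext h1l, fderiv_id]
        simp only [ContinuousLinearMap.id_apply, neg_smul]
        abel
      rw [hKval] at hK'
      have hpair := hk'.prodMk hK'
      have hFdiff : DifferentiableAt ℝ
          (fun q : E × E => ((m (c t₀) q.1, fderiv ℝ (m (c t₀)) q.1 q.2) : E × E))
          ((m (inv (c t₀)) (c t₀), fderiv ℝ (m (m (inv (c t₀)) (c t₀))) one (yc t₀)) : E × E) := by
        apply DifferentiableAt.prodMk
        · exact (diffleftR (c t₀) _).comp _ differentiableAt_fst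
        · exact DifferentiableAt.clm_apply
            ((((smoothDR (c t₀)).differentiable (by simp)) _).comp _ differentiableAt_fst)
            differentiableAt_snd
      have htr := hFdiff.hasFDerivAt.comp_hasDerivAt t₀ hpair
      have hpt : ((m (inv (c t₀)) (c t₀), fderiv ℝ (m (m (inv (c t₀)) (c t₀))) one (yc t₀)) : E × E)
          = ((one, yc t₀) : E × E) := by
        rw [hk1, show m one = id from funext h1l, fderiv_id]
        rfl
      rw [hpt] at htr
      have hli : fderiv ℝ (fun q : E × E => ((m (c t₀) q.1, fderiv ℝ (m (c t₀)) q.1 q.2) : E × E))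
          ((one, yc t₀) : E × E) ((yc t₀, -(2:ℝ) • Gc one (yc t₀)) : E × E)
          = ((fderiv ℝ (m (c t₀)) one (yc t₀),
              -(2:ℝ) • Gc (m (c t₀) one) (fderiv ℝ (m (c t₀)) one (yc t₀))) : E × E) :=
        hleftinv (c t₀) (one, yc t₀) (hycne t₀ ht₀)
      rw [hli, h1r (c t₀), ← hderiv t₀ ht₀] at htr
      have h2nd := (ContinuousLinearMap.snd ℝ E E).hasFDerivAt.comp_hasDerivAt t₀ htr
      have h2nd' : HasDerivAt (fun s => fderiv ℝ (m (c t₀)) (m (inv (c t₀)) (c s))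
          ((fderiv ℝ (m (m (inv (c t₀)) (c s))) one) (yc s)))
          (-(2:ℝ) • Gc (c t₀) (deriv c t₀)) t₀ := by simpa [Function.comp_def] using h2nd
      have hsnd : ∀ s, fderiv ℝ (m (c t₀)) (m (inv (c t₀)) (c s))
          ((fderiv ℝ (m (m (inv (c t₀)) (c s))) one) (yc s)) = fderiv ℝ (m (c s)) one (yc s) := by
        intro s
        have h4 := congrArg (fun L : E →L[ℝ] E => L (yc s)) (AmulR (c t₀) (m (inv (c t₀)) (c s)))
        simp only [ContinuousLinearMap.comp_apply] at h4
        rw [← h4, show m (m (c t₀) (m (inv (c t₀)) (c s))) = m (c s) from by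
          rw [← hassoc, hinvr, h1l]]
      rw [funext hsnd] at h2nd'
      have hev : deriv c =ᶠ[nhds t₀] fun s => fderiv ℝ (m (c s)) one (yc s) := by
        filter_upwards [Ioo_mem_nhds ht₀.1 ht₀.2] with s hs
        exact hderiv s hs
      exact h2nd'.congr_of_eventuallyEq hev
    refine ⟨c, hc0, hgeo, hmatch, ?_⟩
    intro c' hc'0 hgeo' hyc' t ht
    have hcd' : ∀ s ∈ Set.Ioo a bb, HasDerivAt c' (fderiv ℝ (m (c' s)) one (yc s)) s := by
      intro s hs
      have h1 := (hgeo' s hs).2.1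
      have h2 : fderiv ℝ (m (c' s)) one (yc s) = deriv c' s := by
        rw [← hyc' s hs]
        exact A_BR (c' s) (deriv c' s)
      rw [h2]; exact h1
    rcases le_or_gt 0 t with h0t | ht0
    · have hsub : Set.Icc (0:ℝ) t ⊆ Set.Ioo a bb := fun x hx =>
        ⟨lt_of_lt_of_le hab.1 hx.1, lt_of_le_of_lt hx.2 ht.2⟩
      exact (G.uniq_core yc h0t (hyccont.mono hsub) (fun s hs => hcd s (hsub hs))
        (fun s hs => hcd' s (hsub hs))).1 (by rw [hc0, hc'0]) ⟨h0t, le_rfl⟩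
    · have hsub : Set.Icc t (0:ℝ) ⊆ Set.Ioo a bb := fun x hx =>
        ⟨lt_of_lt_of_le ht.1 hx.1, lt_of_le_of_lt hx.2 hab.2⟩
      exact (G.uniq_core yc (le_of_lt ht0) (hyccont.mono hsub) (fun s hs => hcd s (hsub hs))
        (fun s hs => hcd' s (hsub hs))).2 (by rw [hc0, hc'0]) ⟨le_rfl, le_of_lt ht0⟩
end
end

section
/- On a Lie group G, the S-curvature of the canonical bi-invariant spray G_0 with respect to any left invariant measure, evaluated at y ∈ g \ {0}, is S(y) = (1/2) tr(ad(y)). In particular, S ≡ 0 if and only if G is unimodular. -/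
noncomputable section

open scoped BigOperators

/-- The determinant as a continuous multilinear map in the rows. -/
def detCMM (k : ℕ) : ContinuousMultilinearMap ℝ (fun _ : Fin k => (Fin k → ℝ)) ℝ :=
  { (Matrix.detRowAlternating : (Fin k → ℝ) [⋀^Fin k]→ₗ[ℝ] ℝ).toMultilinearMap with
    cont := by
      show Continuous fun M : Fin k → Fin k → ℝ => Matrix.det (Matrix.of M)
      have h : (fun M : Fin k → Fin k → ℝ => Matrix.det (Matrix.of M))
          = fun M : Fin k → Fin k → ℝ =>
            ∑ σ : Equiv.Perm (Fin k), (Equiv.Perm.sign σ : ℝ) * ∏ i, M (σ i) i := by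
        funext M
        exact Matrix.det_apply' (Matrix.of M)
      rw [h]
      refine continuous_finset_sum _ fun σ _ => ?_
      exact continuous_const.mul
        (continuous_finset_prod _ fun i _ =>
          (continuous_apply i).comp (continuous_apply (σ i))) }

lemma detCMM_apply (k : ℕ) (M : Fin k → Fin k → ℝ) :
    detCMM k M = Matrix.det (Matrix.of M) := rfl

lemma det_updateRow_one {k : ℕ} (i : Fin k) (v : Fin k → ℝ) :
    Matrix.det ((1 : Matrix (Fin k) (Fin k) ℝ).updateRow i v) = v i := by
  have hv : ∑ j, v j • (1 : Matrix (Fin k) (Fin k) ℝ) j = v := by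
    funext l
    simp [Matrix.one_apply, Finset.sum_ite_eq']
  calc Matrix.det ((1 : Matrix (Fin k) (Fin k) ℝ).updateRow i v)
      = Matrix.det ((1 : Matrix (Fin k) (Fin k) ℝ).updateRow i
          (∑ j, v j • (1 : Matrix (Fin k) (Fin k) ℝ) j)) := by rw [hv]
    _ = v i • Matrix.det (1 : Matrix (Fin k) (Fin k) ℝ) := Matrix.det_updateRow_sum _ i v
    _ = v i := by simp

/-- Derivative of the determinant at the identity matrix is the trace. -/
lemma hasFDerivAt_det_one (k : ℕ) :
    HasFDerivAt (fun M : Fin k → Fin k → ℝ => Matrix.det (Matrix.of M))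
      (∑ i : Fin k, (ContinuousLinearMap.proj i).comp
        (ContinuousLinearMap.proj (R := ℝ) (φ := fun _ : Fin k => (Fin k → ℝ)) i))
      (1 : Matrix (Fin k) (Fin k) ℝ) := by
  have h := (detCMM k).hasFDerivAt (x := (1 : Matrix (Fin k) (Fin k) ℝ))
  refine h.congr_fderiv ?_
  symm
  ext v
  erw [ContinuousMultilinearMap.linearDeriv_apply]
  have : ∀ i : Fin k, (detCMM k) (Function.update (1 : Matrix (Fin k) (Fin k) ℝ) i (v i))
      = v i i := by
    intro i
    rw [detCMM_apply]
    have : Matrix.of (Function.update (1 : Matrix (Fin k) (Fin k) ℝ) i (v i))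
        = (1 : Matrix (Fin k) (Fin k) ℝ).updateRow i (v i) := rfl
    rw [this, det_updateRow_one]
  simp [this]

/-- The Riemann curvature operator of a spray with coefficients `Gc`
(spray `= (y, -2·Gc x y)` in standard coordinates), via the standard formula
`R^i_k = 2 ∂_{x^k}G^i - y^j ∂²G^i/∂x^j∂y^k + 2G^j ∂²G^i/∂y^j∂y^k - ∂G^i/∂y^j ∂G^j/∂y^k`,
obtained from the mod-horizontal part of `[G, δ_{x^k}]`. -/
def sprayRiemann {E : Type*} [NormedAddCommGroup E] [NormedSpace ℝ E]
    (Gc : E → E → E) (x y v : E) : E :=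
  (2 : ℝ) • fderiv ℝ (fun x' => Gc x' y) x v
    - fderiv ℝ (fun x' => fderiv ℝ (Gc x') y v) x y
    + fderiv ℝ (fun y' => fderiv ℝ (Gc x) y' v) y ((2 : ℝ) • Gc x y)
    - fderiv ℝ (Gc x) y (fderiv ℝ (Gc x) y v)

/-- The S-curvature of a spray with coefficients `Gc` with respect to the measure
`σ(x) dx`: `S(x,y) = ∂G^i/∂y^i - σ(x)⁻¹ yᵐ ∂σ/∂xᵐ`. -/
noncomputable def sprayS {E : Type*} [NormedAddCommGroup E] [NormedSpace ℝ E]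
    [FiniteDimensional ℝ E] (σ : E → ℝ) (Gc : E → E → E) (x y : E) : ℝ :=
  LinearMap.trace ℝ E (fderiv ℝ (Gc x) y : E →ₗ[ℝ] E) - (σ x)⁻¹ * fderiv ℝ σ x y

set_option maxHeartbeats 1600000 in
/-- the S-curvature of the canonical bi-invariant spray `G₀` with respect
to any left invariant measure `σ(x) dx` satisfies `S(y) = (1/2)·tr(ad y)` for
`y ∈ g \ {0}`; in particular `S ≡ 0` iff `G` is unimodular. -/
theorem statement16
    {E : Type*} [NormedAddCommGroup E] [NormedSpace ℝ E] [FiniteDimensional ℝ E]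
    {n : ℕ}
    (m : E → E → E) (one : E) (inv : E → E)
    (hm : ContDiff ℝ (⊤ : ℕ∞) (fun p : E × E => m p.1 p.2))
    (hinv : ContDiff ℝ (⊤ : ℕ∞) inv)
    (h1l : ∀ x, m one x = x) (h1r : ∀ x, m x one = x)
    (hassoc : ∀ a bb cc, m (m a bb) cc = m a (m bb cc))
    (hinvl : ∀ x, m (inv x) x = one) (hinvr : ∀ x, m x (inv x) = one)
    (b : Module.Basis (Fin n) ℝ E)
    (u : E × E → Fin n → ℝ)
    (hu : ∀ p : E × E, ∑ i, u p i • leftInvExt m one (b i) p.1 = p.2)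
    (Gc0 : E → E → E)
    (hGc0 : ∀ p : E × E, p.2 ≠ 0 →
      ∑ i, u p i • completeLift (leftInvExt m one (b i)) p
        = ((p.2, -(2 : ℝ) • Gc0 p.1 p.2) : E × E))
    (σ : E → ℝ) (hσpos : ∀ x, 0 < σ x) (hσsmooth : ContDiff ℝ (⊤ : ℕ∞) σ)
    (hσinv : ∀ g x, σ (m g x) * |LinearMap.det (fderiv ℝ (m g) x : E →ₗ[ℝ] E)| = σ x)
    (ad : E →ₗ[ℝ] E →ₗ[ℝ] E)
    (had : ∀ y v : E, ad y v = liaBracket m one y v) :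
    (∀ y : E, y ≠ 0 →
      sprayS σ Gc0 one y = (1 / 2 : ℝ) * LinearMap.trace ℝ E (ad y)) ∧
    ((∀ y : E, y ≠ 0 → sprayS σ Gc0 one y = 0) ↔
      ∀ X : E, LinearMap.trace ℝ E (ad X) = 0) := by
  classical
  -- the smooth family of differentials of left translations
  have hΦ : ContDiff ℝ (⊤ : ℕ∞) (fun g : E => fderiv ℝ (m g) one) :=
    hm.fderiv (contDiff_const (c := one)) (by simp)
  have hΦd : DifferentiableAt ℝ (fun g : E => fderiv ℝ (m g) one) one :=
    (hΦ.differentiable (by simp)).differentiableAt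
  set Bc : E →L[ℝ] E →L[ℝ] E := fderiv ℝ (fun g : E => fderiv ℝ (m g) one) one with hBdef
  have hmone : m one = id := funext h1l
  have hΦone : fderiv ℝ (m one) one = ContinuousLinearMap.id ℝ E := by
    rw [hmone, fderiv_id]
  -- value and derivative of the left invariant extensions at the identity
  have hLone : ∀ v : E, leftInvExt m one v one = v := by
    intro v
    show fderiv ℝ (m one) one v = v
    rw [hΦone]; rfl
  have hLder : ∀ v : E, fderiv ℝ (leftInvExt m one v) one = Bc.flip v := by
    intro v
    have h : leftInvExt m one v = fun g => (fderiv ℝ (m g) one) v := rfl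
    rw [h, fderiv_clm_apply hΦd (differentiableAt_const v)]
    simp [hBdef]
  -- bracket formula
  have hadf : ∀ y v : E, ad y v = Bc y v - Bc v y := by
    intro y v
    rw [had]
    show VectorField.lieBracket ℝ (leftInvExt m one y) (leftInvExt m one v) one = _
    rw [VectorField.lieBracket, hLder, hLder, hLone, hLone]
    simp
  -- spray coefficient formula at the identity
  have hG : ∀ y' : E, y' ≠ 0 → Gc0 one y' = -(2⁻¹ : ℝ) • Bc y' y' := by
    intro y' hy'
    have h2 := congrArg Prod.snd (hGc0 (one, y') hy')
    simp only [completeLift, Prod.smul_mk, Prod.snd_sum] at h2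
    -- LHS of h2
    have hcoord : ∑ i, u (one, y') i • b i = y' := by
      have h3 := hu (one, y')
      simpa [hLone] using h3
    have hLHS : ∑ i, u (one, y') i • fderiv ℝ (leftInvExt m one (b i)) one y'
        = Bc y' y' := by
      have : ∀ i, fderiv ℝ (leftInvExt m one (b i)) one y' = Bc y' (b i) := by
        intro i; rw [hLder]; rfl
      simp_rw [this, ← map_smul (Bc y'), ← map_sum]
      rw [hcoord]
    rw [hLHS] at h2
    calc Gc0 one y' = (-(2⁻¹ : ℝ)) • ((-(2 : ℝ)) • Gc0 one y') := by
          rw [smul_smul]; norm_num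
      _ = -(2⁻¹ : ℝ) • Bc y' y' := by rw [← h2]
  -- the trace of ad
  have htrad : ∀ y : E, LinearMap.trace ℝ E (ad y)
      = LinearMap.trace ℝ E ((Bc y : E →ₗ[ℝ] E))
        - LinearMap.trace ℝ E ((Bc.flip y : E →ₗ[ℝ] E)) := by
    intro y
    have : ad y = ((Bc y : E →ₗ[ℝ] E)) - ((Bc.flip y : E →ₗ[ℝ] E)) := by
      ext v; simp [hadf]
    rw [this, map_sub]
  -- the σ-term
  have hσd : HasFDerivAt σ (fderiv ℝ σ one) one :=
    ((hσsmooth.differentiable (by simp)) one).hasFDerivAt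
  -- matrix coordinates as a continuous linear map
  set Ml : (E →L[ℝ] E) →ₗ[ℝ] (Fin n → Fin n → ℝ) :=
    { toFun := fun f => (LinearMap.toMatrix b b (↑f : E →ₗ[ℝ] E) : Fin n → Fin n → ℝ)
      map_add' := fun f g => by
        show LinearMap.toMatrix b b ((↑(f + g) : E →ₗ[ℝ] E))
          = LinearMap.toMatrix b b (↑f : E →ₗ[ℝ] E) + LinearMap.toMatrix b b (↑g : E →ₗ[ℝ] E)
        rw [ContinuousLinearMap.coe_add, map_add]
      map_smul' := fun c f => by
        show LinearMap.toMatrix b b ((↑(c • f) : E →ₗ[ℝ] E))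
          = c • LinearMap.toMatrix b b (↑f : E →ₗ[ℝ] E)
        rw [ContinuousLinearMap.coe_smul, map_smul] } with hMldef
  set Mc : (E →L[ℝ] E) →L[ℝ] (Fin n → Fin n → ℝ) :=
    LinearMap.toContinuousLinearMap Ml with hMcdef
  -- the determinant function and its derivative at the identity
  have hΦBc : HasFDerivAt (fun g : E => fderiv ℝ (m g) one) Bc one := hΦd.hasFDerivAt
  have hMc1 : Mc (ContinuousLinearMap.id ℝ E) = (1 : Matrix (Fin n) (Fin n) ℝ) := by
    show LinearMap.toMatrix b b ((↑(ContinuousLinearMap.id ℝ E) : E →ₗ[ℝ] E)) = _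
    rw [ContinuousLinearMap.coe_id, LinearMap.toMatrix_id]
  have hdet1 : HasFDerivAt (fun M : Fin n → Fin n → ℝ => Matrix.det (Matrix.of M))
      (∑ i : Fin n, (ContinuousLinearMap.proj i).comp
        (ContinuousLinearMap.proj (R := ℝ) (φ := fun _ : Fin n => (Fin n → ℝ)) i))
      (Mc (ContinuousLinearMap.id ℝ E)) := by
    rw [hMc1]; exact hasFDerivAt_det_one n
  have hfun : (fun g : E => LinearMap.det ((fderiv ℝ (m g) one : E →L[ℝ] E) : E →ₗ[ℝ] E))
      = fun g : E => Matrix.det (Matrix.of (Mc (fderiv ℝ (m g) one))) := by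
    funext g
    show _ = Matrix.det (LinearMap.toMatrix b b ((fderiv ℝ (m g) one : E →L[ℝ] E) : E →ₗ[ℝ] E))
    rw [LinearMap.det_toMatrix]
  set Dd : E →L[ℝ] ℝ :=
    ((∑ i : Fin n, (ContinuousLinearMap.proj i).comp
        (ContinuousLinearMap.proj (R := ℝ) (φ := fun _ : Fin n => (Fin n → ℝ)) i)).comp
      Mc).comp Bc with hDddef
  have hdfun : HasFDerivAt
      (fun g : E => LinearMap.det ((fderiv ℝ (m g) one : E →L[ℝ] E) : E →ₗ[ℝ] E)) Dd one := by
    rw [hfun]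
    have h1 : HasFDerivAt (fun f : E →L[ℝ] E => Matrix.det (Matrix.of (Mc f)))
        ((∑ i : Fin n, (ContinuousLinearMap.proj i).comp
          (ContinuousLinearMap.proj (R := ℝ) (φ := fun _ : Fin n => (Fin n → ℝ)) i)).comp Mc)
        (ContinuousLinearMap.id ℝ E) := hdet1.comp _ Mc.hasFDerivAt
    have h2 : HasFDerivAt (fun g : E => Matrix.det (Matrix.of (Mc (fderiv ℝ (m g) one))))
        (((∑ i : Fin n, (ContinuousLinearMap.proj i).comp
          (ContinuousLinearMap.proj (R := ℝ) (φ := fun _ : Fin n => (Fin n → ℝ)) i)).comp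
          Mc).comp Bc) one := by
      rw [← hΦone] at h1
      exact HasFDerivAt.comp (f := fun g : E => fderiv ℝ (m g) one) one h1 hΦBc
    exact h2
  -- value of Dd
  have hDdval : ∀ w : E, Dd w = LinearMap.trace ℝ E ((Bc w : E →ₗ[ℝ] E)) := by
    intro w
    rw [LinearMap.trace_eq_matrix_trace ℝ b]
    have h7 : Mc (Bc w) = LinearMap.toMatrix b b ((Bc w : E →L[ℝ] E) : E →ₗ[ℝ] E) := rfl
    simp [hDddef, Matrix.trace, Matrix.diag, h7, ContinuousLinearMap.sum_apply]
    erw [ContinuousLinearMap.sum_apply]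
    rfl
  have hd1 : LinearMap.det ((fderiv ℝ (m one) one : E →L[ℝ] E) : E →ₗ[ℝ] E) = 1 := by
    rw [hΦone]; simp
  have hpos : ∀ᶠ g in nhds one,
      0 < LinearMap.det ((fderiv ℝ (m g) one : E →L[ℝ] E) : E →ₗ[ℝ] E) := by
    have hc : ContinuousAt
        (fun g : E => LinearMap.det ((fderiv ℝ (m g) one : E →L[ℝ] E) : E →ₗ[ℝ] E)) one :=
      hdfun.continuousAt
    have h01 : (0 : ℝ) < LinearMap.det ((fderiv ℝ (m one) one : E →L[ℝ] E) : E →ₗ[ℝ] E) := by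
      rw [hd1]; norm_num
    exact hc.eventually (eventually_gt_nhds h01)
  have hconst : (fun g : E =>
      σ g * LinearMap.det ((fderiv ℝ (m g) one : E →L[ℝ] E) : E →ₗ[ℝ] E))
      =ᶠ[nhds one] fun _ => σ one := by
    filter_upwards [hpos] with g hg
    have h4 := hσinv g one
    rw [h1r g, abs_of_pos hg] at h4
    exact h4
  have hmul : HasFDerivAt (fun g : E =>
      σ g * LinearMap.det ((fderiv ℝ (m g) one : E →L[ℝ] E) : E →ₗ[ℝ] E))
      (σ one • Dd
        + (LinearMap.det ((fderiv ℝ (m one) one : E →L[ℝ] E) : E →ₗ[ℝ] E)) • fderiv ℝ σ one)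
      one := hσd.mul hdfun
  have hzero : σ one • Dd
      + (LinearMap.det ((fderiv ℝ (m one) one : E →L[ℝ] E) : E →ₗ[ℝ] E)) • fderiv ℝ σ one
      = 0 := by
    have h5 : fderiv ℝ (fun g : E =>
        σ g * LinearMap.det ((fderiv ℝ (m g) one : E →L[ℝ] E) : E →ₗ[ℝ] E)) one
        = fderiv ℝ (fun _ : E => σ one) one := hconst.fderiv_eq
    rw [hmul.fderiv] at h5
    rw [h5]
    simp
  have hσterm : ∀ y : E, fderiv ℝ σ one y
      = -(σ one * LinearMap.trace ℝ E ((Bc y : E →ₗ[ℝ] E))) := by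
    intro y
    have h8 := congrArg (fun (L : E →L[ℝ] ℝ) => L y) hzero
    simp only [ContinuousLinearMap.add_apply, ContinuousLinearMap.smul_apply,
      ContinuousLinearMap.zero_apply, hd1, one_smul, smul_eq_mul] at h8
    rw [hDdval y] at h8
    linarith
  -- main formula
  have main : ∀ y : E, y ≠ 0 →
      sprayS σ Gc0 one y = (1 / 2 : ℝ) * LinearMap.trace ℝ E (ad y) := by
    intro y hy
    have hqd : HasFDerivAt (fun y' : E => -(2⁻¹ : ℝ) • Bc y' y')
        (-(2⁻¹ : ℝ) • (Bc y + Bc.flip y)) y := by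
      have hdiag : HasFDerivAt (fun y' : E => (y', y'))
          ((ContinuousLinearMap.id ℝ E).prod (ContinuousLinearMap.id ℝ E)) y :=
        HasFDerivAt.prodMk (hasFDerivAt_id y) (hasFDerivAt_id y)
      have h1 := HasFDerivAt.comp (f := fun y' : E => (y', y')) y
          (Bc.isBoundedBilinearMap.hasFDerivAt (y, y)) hdiag
      have h2 := h1.const_smul (-(2⁻¹ : ℝ))
      have hD : (-(2⁻¹ : ℝ)) • ((Bc.isBoundedBilinearMap.deriv (y, y)).comp
          ((ContinuousLinearMap.id ℝ E).prod (ContinuousLinearMap.id ℝ E)))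
          = -(2⁻¹ : ℝ) • (Bc y + Bc.flip y) := by
        ext v
        simp [IsBoundedBilinearMap.deriv_apply]
        abel
      rw [← hD]
      exact h2
    have hGd : fderiv ℝ (Gc0 one) y = -(2⁻¹ : ℝ) • (Bc y + Bc.flip y) := by
      have hev : Gc0 one =ᶠ[nhds y] fun y' => -(2⁻¹ : ℝ) • Bc y' y' := by
        filter_upwards [isOpen_compl_singleton.mem_nhds (by simpa using hy)] with y' hy'
        exact hG y' hy'
      rw [hev.fderiv_eq, hqd.fderiv]
    have hσ0 : σ one ≠ 0 := ne_of_gt (hσpos one)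
    show LinearMap.trace ℝ E ((fderiv ℝ (Gc0 one) y : E →L[ℝ] E) : E →ₗ[ℝ] E)
      - (σ one)⁻¹ * fderiv ℝ σ one y = _
    have key : ∀ a t1 t2 : ℝ, a ≠ 0 →
        -(2⁻¹ : ℝ) • (t1 + t2) - a⁻¹ * -(a * t1) = (1 / 2) * (t1 - t2) := by
      intro a t1 t2 ha
      rw [smul_eq_mul]
      field_simp
      ring
    rw [hGd, hσterm y, htrad y, ContinuousLinearMap.coe_smul, ContinuousLinearMap.coe_add,
      map_smul, map_add]
    exact key (σ one) _ _ hσ0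
  refine ⟨main, ?_, ?_⟩
  · intro h X
    by_cases hX : X = 0
    · subst hX; simp
    · have h6 := h X hX
      rw [main X hX] at h6
      linarith
  · intro h y hy
    rw [main y hy, h y, mul_zero]
end
end

section
/- Let G be a Lie group with a left invariant spray G = G_0 - H^i ∂_{u^i} and spray vector field η. With respect to any left invariant smooth measure on G, the S-curvature in left invariant frame coordinates is S = (1/2) ∂H^i/∂u^i + (1/2) c_{lj}^j u^l; equivalently, S(y) = tr_ℝ(N(y,·) + ad(y)) where N(y,v) = (1/2) Dη(y,v) - (1/2)[y,v]. -/
noncomputable section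

attribute [local instance] Matrix.normedAddCommGroup Matrix.normedSpace


attribute [local instance] Matrix.normedAddCommGroup Matrix.normedSpace

lemma aux_entry_diff {n : ℕ} (i j : Fin n) :
    Differentiable ℝ (fun M : Matrix (Fin n) (Fin n) ℝ => M i j) := by
  have := (LinearMap.toContinuousLinearMap (Matrix.entryLinearMap ℝ ℝ i j)).differentiable
  rwa [LinearMap.coe_toContinuousLinearMap'] at this

lemma aux_det_diff {n : ℕ} :
    Differentiable ℝ (Matrix.det : Matrix (Fin n) (Fin n) ℝ → ℝ) := by
  classical
  have h : (Matrix.det : Matrix (Fin n) (Fin n) ℝ → ℝ)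
      = fun M => ∑ σ : Equiv.Perm (Fin n),
          ((Equiv.Perm.sign σ : ℤ) : ℝ) * ∏ i, M (σ i) i := by
    funext M; rw [Matrix.det_apply']
  rw [h]
  apply Differentiable.fun_sum
  intro σ _
  apply Differentiable.const_mul
  intro M
  exact (HasFDerivAt.finset_prod (u := Finset.univ)
    (g := fun i (M : Matrix (Fin n) (Fin n) ℝ) => M (σ i) i)
    (fun i _ => ((aux_entry_diff (σ i) i) M).hasFDerivAt)).differentiableAt

lemma aux_det_hasDerivAt {n : ℕ} (X : Matrix (Fin n) (Fin n) ℝ) :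
    HasDerivAt (fun t : ℝ => Matrix.det (1 + t • X)) (Matrix.trace X) 0 := by
  classical
  set q : Polynomial ℝ :=
    (Matrix.det (1 + (Polynomial.X : Polynomial ℝ) • X.map Polynomial.C)).divX.divX with hq
  have h : ∀ t : ℝ, Matrix.det (1 + t • X)
      = 1 + Matrix.trace X * t + Polynomial.eval t q * t ^ 2 := fun t =>
    Matrix.det_one_add_smul t X
  have h1 : HasDerivAt (fun t : ℝ => Matrix.trace X * t) (Matrix.trace X) 0 := by
    simpa using (hasDerivAt_id (0:ℝ)).const_mul (Matrix.trace X)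
  have h2 : HasDerivAt (fun t : ℝ => Polynomial.eval t q * t ^ 2) 0 0 := by
    have := (q.hasDerivAt (0:ℝ)).fun_mul (hasDerivAt_pow 2 (0:ℝ))
    simpa using this
  have h3 : HasDerivAt (fun t : ℝ =>
      1 + Matrix.trace X * t + Polynomial.eval t q * t ^ 2) (Matrix.trace X) 0 := by
    simpa using ((hasDerivAt_const (0:ℝ) (1:ℝ)).fun_add h1).fun_add h2
  exact h3.congr_of_eventuallyEq (Filter.Eventually.of_forall h)

lemma aux_fderiv_det_one {n : ℕ} (X : Matrix (Fin n) (Fin n) ℝ) :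
    fderiv ℝ (Matrix.det : Matrix (Fin n) (Fin n) ℝ → ℝ) 1 X = Matrix.trace X := by
  have h1 : HasFDerivAt (Matrix.det : Matrix (Fin n) (Fin n) ℝ → ℝ)
      (fderiv ℝ Matrix.det 1) 1 := (aux_det_diff 1).hasFDerivAt
  have hline : HasDerivAt (fun t : ℝ => (1 : Matrix (Fin n) (Fin n) ℝ) + t • X) X 0 := by
    have := ((hasDerivAt_id (0:ℝ)).smul_const X).const_add (1 : Matrix (Fin n) (Fin n) ℝ)
    rw [one_smul] at this
    exact this
  have h2 : HasDerivAt (fun t : ℝ => Matrix.det ((1 : Matrix (Fin n) (Fin n) ℝ) + t • X))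
      (fderiv ℝ Matrix.det 1 X) 0 := by
    have h1' : HasFDerivAt (Matrix.det : Matrix (Fin n) (Fin n) ℝ → ℝ)
        (fderiv ℝ Matrix.det 1) ((1 : Matrix (Fin n) (Fin n) ℝ) + (0:ℝ) • X) := by
      simpa using h1
    exact h1'.comp_hasDerivAt 0 hline
  exact h2.unique (aux_det_hasDerivAt X)

/-- for a left invariant spray `G = G₀ - H^i ∂_{u^i}` with spray vector
field `η`, and any left invariant measure `σ(x) dx`, the S-curvature at
`y ∈ g \ {0}` (at the identity, equivalently `S = (1/2)∂H^i/∂u^i + (1/2)c_{lj}^j u^l`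
in the left invariant frame) is `S(y) = tr(N(y,·) + ad y)`, where
`N(y,v) = (1/2)Dη(y,v) - (1/2)[y,v]`, so that
`N(y,·) + ad y = (1/2)·Dη(y,·) + (1/2)·ad y` as a linear map. -/
theorem statement17
    {E : Type*} [NormedAddCommGroup E] [NormedSpace ℝ E] [FiniteDimensional ℝ E]
    {n : ℕ}
    (m : E → E → E) (one : E) (inv : E → E)
    (hm : ContDiff ℝ (⊤ : ℕ∞) (fun p : E × E => m p.1 p.2))
    (hinv : ContDiff ℝ (⊤ : ℕ∞) inv)
    (h1l : ∀ x, m one x = x) (h1r : ∀ x, m x one = x)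
    (hassoc : ∀ a bb cc, m (m a bb) cc = m a (m bb cc))
    (hinvl : ∀ x, m (inv x) x = one) (hinvr : ∀ x, m x (inv x) = one)
    (b : Module.Basis (Fin n) ℝ E)
    (u : E × E → Fin n → ℝ)
    (hu : ∀ p : E × E, ∑ i, u p i • leftInvExt m one (b i) p.1 = p.2)
    (Gc : E → E → E)
    (hGchom : ∀ (x y : E) (t : ℝ), 0 < t → Gc x (t • y) = (t ^ 2) • Gc x y)
    (hGcsmooth : ∀ p : E × E, p.2 ≠ 0 → ContDiffAt ℝ (⊤ : ℕ∞) (fun q : E × E => Gc q.1 q.2) p)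
    (hleftinv : ∀ (h : E) (p : E × E), p.2 ≠ 0 →
      fderiv ℝ (fun q : E × E => ((m h q.1, fderiv ℝ (m h) q.1 q.2) : E × E)) p
          ((p.2, -(2 : ℝ) • Gc p.1 p.2) : E × E)
        = ((fderiv ℝ (m h) p.1 p.2,
            -(2 : ℝ) • Gc (m h p.1) (fderiv ℝ (m h) p.1 p.2)) : E × E))
    (η : E → E)
    (hη : ∀ y : E, y ≠ 0 →
      η y = (∑ i, u (one, y) i • completeLift (leftInvExt m one (b i)) ((one, y) : E × E)).2
        + (2 : ℝ) • Gc one y)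
    (σ : E → ℝ) (hσpos : ∀ x, 0 < σ x) (hσsmooth : ContDiff ℝ (⊤ : ℕ∞) σ)
    (hσinv : ∀ g x, σ (m g x) * |LinearMap.det (fderiv ℝ (m g) x : E →ₗ[ℝ] E)| = σ x)
    (ad : E →ₗ[ℝ] E →ₗ[ℝ] E)
    (had : ∀ y v : E, ad y v = liaBracket m one y v) :
    ∀ y : E, y ≠ 0 →
      sprayS σ Gc one y
        = LinearMap.trace ℝ E
            ((1 / 2 : ℝ) • (fderiv ℝ η y : E →ₗ[ℝ] E) + (1 / 2 : ℝ) • ad y) := by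
  intro y hy
  classical
  set L : E → (E →L[ℝ] E) := fun g => fderiv ℝ (m g) one with hLdef
  have hmone : m one = id := funext h1l
  have hLone : L one = ContinuousLinearMap.id ℝ E := by
    rw [hLdef]; simp only [hmone]; exact fderiv_id
  have hLsmooth : ContDiff ℝ (⊤ : ℕ∞) L := hm.fderiv contDiff_const (by simp)
  have hLdiff : DifferentiableAt ℝ L one :=
    (hLsmooth.differentiable (by simp)).differentiableAt
  set D2 : E →L[ℝ] E →L[ℝ] E := fderiv ℝ L one with hD2
  -- values at identity
  have hUone : ∀ v : E, leftInvExt m one v one = v := by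
    intro v
    show fderiv ℝ (m one) one v = v
    rw [hmone, fderiv_id]; rfl
  -- derivative of left-invariant fields at identity
  have hfderivU : ∀ v : E, fderiv ℝ (leftInvExt m one v) one = D2.flip v := by
    intro v
    have : fderiv ℝ (fun g => L g v) one
        = (L one).comp (fderiv ℝ (fun _ : E => v) one) + (fderiv ℝ L one).flip v :=
      fderiv_clm_apply hLdiff (differentiableAt_const v)
    simp [fderiv_const] at this
    exact this
  -- coordinates at identity
  have hcoord : ∀ z : E, (fun i => u (one, z) i) = fun i => b.repr z i := by
    intro z
    have h0 := hu (one, z)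
    simp only [hUone] at h0
    have h1 := b.repr_sum_self (fun i => u (one, z) i)
    rw [h0] at h1
    funext i
    exact (congrFun h1 i).symm
  -- explicit formula for η away from 0
  have hη' : ∀ z : E, z ≠ 0 → η z = D2 z z + (2 : ℝ) • Gc one z := by
    intro z hz
    rw [hη z hz]
    congr 1
    rw [Prod.snd_sum]
    have : ∀ i, (u (one, z) i • completeLift (leftInvExt m one (b i)) ((one, z) : E × E)).2
        = b.repr z i • D2 z (b i) := by
      intro i
      have hc : u (one, z) i = b.repr z i := congrFun (hcoord z) i
      simp only [completeLift, Prod.smul_snd, hc, hfderivU]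
      rfl
    rw [Finset.sum_congr rfl (fun i _ => this i)]
    calc ∑ i, b.repr z i • D2 z (b i) = D2 z (∑ i, b.repr z i • b i) := by
          rw [map_sum]; simp
      _ = D2 z z := by rw [b.sum_repr]
  -- differentiability of Gc one at y
  have hGcd : DifferentiableAt ℝ (Gc one) y := by
    have h1 : ContDiffAt ℝ (⊤ : ℕ∞) (fun q : E × E => Gc q.1 q.2) (one, y) :=
      hGcsmooth (one, y) hy
    have h2 : ContDiffAt ℝ (⊤ : ℕ∞) (fun z : E => ((one, z) : E × E)) y :=
      (ContDiffAt.prodMk contDiffAt_const contDiffAt_id)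
    exact (h1.comp y h2).differentiableAt (by simp)
  -- derivative of η at y
  have hFd : HasFDerivAt (fun z : E => D2 z z) (D2 y + D2.flip y) y := by
    have h1 : HasFDerivAt (fun z : E => D2 z) D2 y := D2.hasFDerivAt
    have h2 : HasFDerivAt (fun z : E => z) (ContinuousLinearMap.id ℝ E) y :=
      hasFDerivAt_id y
    have := h1.clm_apply h2
    simpa using this
  have hηev : (fun z : E => D2 z z + (2 : ℝ) • Gc one z) =ᶠ[nhds y] η := by
    filter_upwards [eventually_ne_nhds hy] with z hz
    exact (hη' z hz).symm
  have hηd : HasFDerivAt η (D2 y + D2.flip y + (2 : ℝ) • fderiv ℝ (Gc one) y) y := by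
    have h2 : HasFDerivAt (fun z : E => (2 : ℝ) • Gc one z)
        ((2 : ℝ) • fderiv ℝ (Gc one) y) y := hGcd.hasFDerivAt.const_smul (2 : ℝ)
    exact (hFd.add h2).congr_of_eventuallyEq hηev.symm
  have hηfd : fderiv ℝ η y = D2 y + D2.flip y + (2 : ℝ) • fderiv ℝ (Gc one) y := hηd.fderiv
  -- ad formula
  have hadf : ∀ v : E, ad y v = D2 y v - D2 v y := by
    intro v
    rw [had, liaBracket, VectorField.lieBracket, hUone, hUone, hfderivU, hfderivU]
    rfl
  -- the measure identity
  set Φ : (E →L[ℝ] E) →ₗ[ℝ] Matrix (Fin n) (Fin n) ℝ :=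
    (LinearMap.toMatrix b b).toLinearMap.comp (ContinuousLinearMap.coeLM ℝ) with hΦdef
  set ΦC : (E →L[ℝ] E) →L[ℝ] Matrix (Fin n) (Fin n) ℝ :=
    LinearMap.toContinuousLinearMap Φ with hΦC
  have hΦCapp : ∀ T, ΦC T = Φ T := fun T => rfl
  set ψ : E → ℝ := fun g => Matrix.det (ΦC (L g)) with hψdef
  have hψone : ψ one = 1 := by
    rw [hψdef]
    simp only [hΦCapp, hLone, hΦdef]
    simp [LinearMap.toMatrix_id]
  have hψd : HasFDerivAt ψ
      ((fderiv ℝ Matrix.det (1 : Matrix (Fin n) (Fin n) ℝ)).comp (ΦC.comp D2)) one := by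
    have hdet1 : HasFDerivAt (Matrix.det : Matrix (Fin n) (Fin n) ℝ → ℝ)
        (fderiv ℝ Matrix.det (1 : Matrix (Fin n) (Fin n) ℝ)) (ΦC (L one)) := by
      have h1 : ΦC (L one) = 1 := by
        simp only [hΦCapp, hLone, hΦdef]; simp [LinearMap.toMatrix_id]
      rw [h1]
      exact (aux_det_diff _).hasFDerivAt
    exact hdet1.comp one (ΦC.hasFDerivAt.comp one hLdiff.hasFDerivAt)
  have hψpos : ∀ᶠ g in nhds one, 0 < ψ g :=
    hψd.continuousAt.eventually (eventually_gt_nhds (by rw [hψone]; norm_num))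
  have hψconst : (fun g => σ g * ψ g) =ᶠ[nhds one] fun _ => σ one := by
    filter_upwards [hψpos] with g hg
    have h1 := hσinv g one
    rw [h1r] at h1
    have h2 : LinearMap.det ((fderiv ℝ (m g) one : E →L[ℝ] E) : E →ₗ[ℝ] E) = ψ g := by
      show _ = Matrix.det (Φ (L g))
      have h3 : Φ (L g) = LinearMap.toMatrix b b ((L g : E →L[ℝ] E) : E →ₗ[ℝ] E) := rfl
      rw [h3, LinearMap.det_toMatrix]
    rw [← h1, h2, abs_of_pos hg]
  have hconstd : HasFDerivAt (fun g => σ g * ψ g) 0 one :=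
    (hasFDerivAt_const (𝕜 := ℝ) (σ one) one).congr_of_eventuallyEq hψconst
  have hσd : HasFDerivAt σ (fderiv ℝ σ one) one :=
    ((hσsmooth.differentiable (by simp)) one).hasFDerivAt
  have hmul : HasFDerivAt (fun g => σ g * ψ g)
      (σ one • ((fderiv ℝ Matrix.det (1 : Matrix (Fin n) (Fin n) ℝ)).comp (ΦC.comp D2))
        + ψ one • fderiv ℝ σ one) one := hσd.mul hψd
  have hzero := hconstd.unique hmul
  have hσtr : fderiv ℝ σ one y
      = -(σ one * LinearMap.trace ℝ E ((D2 y : E →L[ℝ] E) : E →ₗ[ℝ] E)) := by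
    have h1 := congrFun (congrArg DFunLike.coe hzero) y
    simp only [ContinuousLinearMap.zero_apply, ContinuousLinearMap.add_apply,
      ContinuousLinearMap.coe_smul', Pi.smul_apply, ContinuousLinearMap.coe_comp',
      Function.comp_apply, hψone, one_smul, smul_eq_mul] at h1
    have h2 : fderiv ℝ Matrix.det (1 : Matrix (Fin n) (Fin n) ℝ) (ΦC (D2 y))
        = LinearMap.trace ℝ E ((D2 y : E →L[ℝ] E) : E →ₗ[ℝ] E) := by
      rw [aux_fderiv_det_one]
      have h3 : ΦC (D2 y) = LinearMap.toMatrix b b ((D2 y : E →L[ℝ] E) : E →ₗ[ℝ] E) := rfl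
      rw [h3]
      exact (LinearMap.trace_eq_matrix_trace ℝ b _).symm
    rw [h2] at h1
    linarith
  -- final assembly
  have hRHSmap : (1 / 2 : ℝ) • (fderiv ℝ η y : E →ₗ[ℝ] E) + (1 / 2 : ℝ) • ad y
      = ((D2 y : E →L[ℝ] E) : E →ₗ[ℝ] E)
        + ((fderiv ℝ (Gc one) y : E →L[ℝ] E) : E →ₗ[ℝ] E) := by
    apply LinearMap.ext; intro v
    have h1 : fderiv ℝ η y v = D2 y v + D2 v y + (2 : ℝ) • fderiv ℝ (Gc one) y v := by
      rw [hηfd]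
      simp [ContinuousLinearMap.add_apply, ContinuousLinearMap.flip_apply]
    simp only [LinearMap.add_apply, LinearMap.smul_apply, ContinuousLinearMap.coe_coe,
      h1, hadf v]
    module
  unfold sprayS
  rw [hRHSmap, map_add, hσtr]
  have hne : σ one ≠ 0 := (hσpos one).ne'
  field_simp
  ring
end
end
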